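/- arXiv:2511.20039 — 11 statements merged into one kernel-verified Lean document; each statement's English description precedes it below -/
import Mathlib

section
/- Let k ≥ 1 and let ℓ_1, …, ℓ_k : [0,∞) → [0,∞) be nondecreasing functions that do not have common levels of constancy. Then there is at most one collection of nondecreasing functions t_1, …, t_k : [0,∞) → [0,∞) such that t_1(s) + ⋯ + t_k(s) = s for all s ≥ 0 and ℓ_i(t_i(s)) = ℓ_j(t_j(s)) for all indices i, j and all s ≥ 0 (i.e., at most one solution of the balance problem for ℓ_1, …, ℓ_k). -/
open scoped NNReal

/-- The functions `ℓ i : [0,∞) → [0,∞)` have no common levels of constancy: there are no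
indices `i ≠ j` and reals `0 ≤ a < b`, `0 ≤ c < d` with `ℓ i a = ℓ i b = ℓ j c = ℓ j d`. -/
def NoCommonLevelsOfConstancy {k : ℕ} (ℓ : Fin k → ℝ≥0 → ℝ≥0) : Prop :=
  ¬ ∃ (i j : Fin k) (a b c d : ℝ≥0), i ≠ j ∧ a < b ∧ c < d ∧
      ℓ i a = ℓ i b ∧ ℓ i b = ℓ j c ∧ ℓ j c = ℓ j d

/-- `t` is a solution of the balance problem for `ℓ`: the `t i` are nondecreasing functions
`[0,∞) → [0,∞)` with `t 1 s + ⋯ + t k s = s` for all `s` and `ℓ i (t i s) = ℓ j (t j s)`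
for all `i`, `j`, `s`. -/
def IsBalanceSolution {k : ℕ} (ℓ t : Fin k → ℝ≥0 → ℝ≥0) : Prop :=
  (∀ i, Monotone (t i)) ∧ (∀ s, ∑ i, t i s = s) ∧
    (∀ i j s, ℓ i (t i s) = ℓ j (t j s))

/-- If two solutions differ at `s` with `u i s < v i s`, we get a contradiction. -/
lemma balance_key {k : ℕ} (ℓ : Fin k → ℝ≥0 → ℝ≥0) (hℓ : ∀ i, Monotone (ℓ i))
    (hnc : NoCommonLevelsOfConstancy ℓ)
    (u v : Fin k → ℝ≥0 → ℝ≥0)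
    (hu : IsBalanceSolution ℓ u) (hv : IsBalanceSolution ℓ v)
    (i : Fin k) (s : ℝ≥0) (hiv : u i s < v i s) : False := by
  obtain ⟨-, husum, hubal⟩ := hu
  obtain ⟨-, hvsum, hvbal⟩ := hv
  -- find j with v j s < u j s
  have hsum : ∑ m, u m s = ∑ m, v m s := by rw [husum, hvsum]
  have hj : ∃ j, v j s < u j s := by
    by_contra h
    push_neg at h
    have : ∑ m, u m s < ∑ m, v m s :=
      Finset.sum_lt_sum (fun m _ => h m) ⟨i, Finset.mem_univ i, hiv⟩
    exact absurd hsum this.ne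
  obtain ⟨j, hjv⟩ := hj
  have hij : i ≠ j := fun h => by subst h; exact absurd hiv (not_lt.2 hjv.le)
  -- chain of inequalities
  have h1 : ℓ i (u i s) ≤ ℓ i (v i s) := hℓ i hiv.le
  have h2 : ℓ j (v j s) ≤ ℓ j (u j s) := hℓ j hjv.le
  have e1 : ℓ i (u i s) = ℓ j (u j s) := hubal i j s
  have e2 : ℓ i (v i s) = ℓ j (v j s) := hvbal i j s
  have hall : ℓ i (u i s) = ℓ i (v i s) :=
    le_antisymm h1 (by rw [e1, e2]; exact h2)
  exact hnc ⟨i, j, u i s, v i s, v j s, u j s, hij, hiv, hjv,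
    hall, e2, (e2 ▸ hall ▸ e1 : ℓ j (v j s) = ℓ j (u j s)).symm ▸ rfl⟩

/-- Uniqueness for the balance problem: if the nondecreasing functions `ℓ i` have no common
levels of constancy, then there is at most one solution of the balance problem for them. -/
theorem balance_solution_unique {k : ℕ} (hk : 1 ≤ k)
    (ℓ : Fin k → ℝ≥0 → ℝ≥0) (hℓ : ∀ i, Monotone (ℓ i))
    (hnc : NoCommonLevelsOfConstancy ℓ)
    (t t' : Fin k → ℝ≥0 → ℝ≥0)
    (ht : IsBalanceSolution ℓ t) (ht' : IsBalanceSolution ℓ t') :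
    t = t' := by
  funext i s
  rcases lt_trichotomy (t i s) (t' i s) with h | h | h
  · exact absurd (balance_key ℓ hℓ hnc t t' ht ht' i s h) id
  · exact h
  · exact absurd (balance_key ℓ hℓ hnc t' t ht' ht i s h) id
end

section
/- Let k ≥ 1, let ℓ_1, …, ℓ_k : [0,∞) → [0,∞) be nondecreasing functions with no common levels of constancy, and let t_1, …, t_k : [0,∞) → [0,∞) be nondecreasing functions with t_1(u) + ⋯ + t_k(u) = u for all u ≥ 0 and ℓ_i(t_i(u)) = ℓ_j(t_j(u)) for all i, j, u. Suppose that for some index i, some a ≥ 0 and some ε > 0 one has ℓ_i(a + ε) = ℓ_i(a), and that for some s ≥ 0 one has t_i(s) = a. Then for every u ∈ [s, s + ε] one has t_i(u) = a + u − s, and t_j(u) = t_j(s) for every index j ≠ i; that is, on [s, s+ε] the function t_i grows linearly with slope 1 while all other t_j remain constant. -/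
open scoped NNReal

/-- If `ℓ i` is constant on `[a, a + ε]` and `t i s = a`, then on `[s, s + ε]` the
function `t i` grows linearly with slope `1` while all other `t j` remain constant. -/
theorem stmt1 {k : ℕ} (hk : 1 ≤ k)
    (ℓ t : Fin k → ℝ≥0 → ℝ≥0) (hℓ : ∀ i, Monotone (ℓ i))
    (hnc : NoCommonLevelsOfConstancy ℓ) (ht : IsBalanceSolution ℓ t)
    (i : Fin k) (a ε : ℝ≥0) (hε : 0 < ε) (hconst : ℓ i (a + ε) = ℓ i a)
    (s : ℝ≥0) (hs : t i s = a) :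
    ∀ u, s ≤ u → u ≤ s + ε →
      ((t i u : ℝ) = (a : ℝ) + (u : ℝ) - (s : ℝ)) ∧ (∀ j, j ≠ i → t j u = t j s) := by
  obtain ⟨htm, hsum, hbal⟩ := ht
  intro u hu1 hu2
  set S := Finset.univ.erase i with hS
  have hsplit : ∀ v : ℝ≥0, (t i v : ℝ) + ∑ j ∈ S, (t j v : ℝ) = v := by
    intro v
    have h0 : t i v + ∑ j ∈ Finset.univ.erase i, t j v = ∑ j, t j v :=
      Finset.add_sum_erase Finset.univ (fun j => t j v) (Finset.mem_univ i)
    have h1 : t i v + ∑ j ∈ S, t j v = v := by rw [hS, h0]; exact hsum v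
    have h2 := congrArg NNReal.toReal h1
    push_cast at h2
    exact h2
  have hfmono : (∑ j ∈ S, (t j s : ℝ)) ≤ ∑ j ∈ S, (t j u : ℝ) := by
    apply Finset.sum_le_sum
    intro j _
    exact_mod_cast htm j hu1
  have hfs : (∑ j ∈ S, (t j s : ℝ)) = (s : ℝ) - a := by
    have h := hsplit s; rw [hs] at h; linarith
  have htiu_le : (t i u : ℝ) ≤ (a : ℝ) + ε := by
    have h1 := hsplit u
    have h3 : (u : ℝ) ≤ (s : ℝ) + ε := by exact_mod_cast hu2
    linarith
  have htiu_le' : t i u ≤ a + ε := by exact_mod_cast htiu_le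
  have htiu_ge : a ≤ t i u := hs ▸ htm i hu1
  have hlconst : ℓ i (t i u) = ℓ i a :=
    le_antisymm ((hℓ i htiu_le').trans_eq hconst) (hℓ i htiu_ge)
  have hjconst : ∀ j, j ≠ i → t j u = t j s := by
    intro j hj
    by_contra hne
    have hlt : t j s < t j u := lt_of_le_of_ne (htm j hu1) (fun h => hne h.symm)
    apply hnc
    refine ⟨i, j, a, a + ε, t j s, t j u, hj.symm, lt_add_of_pos_right a hε, hlt,
      hconst.symm, ?_, ?_⟩
    · rw [hconst, ← hs]; exact hbal i j s
    · have e1 : ℓ j (t j s) = ℓ i a := by rw [← hs]; exact hbal j i s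
      have e2 : ℓ j (t j u) = ℓ i a := (hbal j i u).trans hlconst
      exact e1.trans e2.symm
  refine ⟨?_, hjconst⟩
  have hfu : (∑ j ∈ S, (t j u : ℝ)) = (s : ℝ) - a := by
    rw [← hfs]
    refine Finset.sum_congr rfl fun j hjS => ?_
    exact congrArg NNReal.toReal (hjconst j (Finset.ne_of_mem_erase hjS))
  have h := hsplit u
  linarith
end

section
/- Let k ≥ 1, let ℓ_1, …, ℓ_k : [0,∞) → [0,∞) be nondecreasing functions with no common levels of constancy, and let t_1, …, t_k : [0,∞) → [0,∞) be nondecreasing functions with t_1(u) + ⋯ + t_k(u) = u for all u ≥ 0 and ℓ_i(t_i(u)) = ℓ_j(t_j(u)) for all i, j, u. Suppose that for some s > 0 one has ℓ_i(v) < ℓ_i(t_i(s)) for every index i and every v with 0 ≤ v < t_i(s). Then t_i(u) < t_i(s) for every index i and every u with 0 ≤ u < s. -/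
open scoped NNReal

/-- If for some `s > 0` one has `ℓ i v < ℓ i (t i s)` for every `i` and every `v < t i s`,
then `t i u < t i s` for every `i` and every `u < s`. -/
theorem stmt2 {k : ℕ} (hk : 1 ≤ k)
    (ℓ t : Fin k → ℝ≥0 → ℝ≥0) (hℓ : ∀ i, Monotone (ℓ i))
    (hnc : NoCommonLevelsOfConstancy ℓ) (ht : IsBalanceSolution ℓ t)
    (s : ℝ≥0) (hs : 0 < s)
    (h : ∀ i, ∀ v, v < t i s → ℓ i v < ℓ i (t i s)) :
    ∀ i, ∀ u, u < s → t i u < t i s := by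
  intro i u hu
  obtain ⟨htm, hsum, heq⟩ := ht
  have hle : ∀ m : Fin k, t m u ≤ t m s := fun m => htm m hu.le
  have hsl : ∑ m, t m u < ∑ m, t m s := by rw [hsum, hsum]; exact hu
  obtain ⟨j, -, hj⟩ := Finset.exists_lt_of_sum_lt hsl
  have hj' : ℓ j (t j u) < ℓ j (t j s) := h j _ hj
  rcases lt_or_eq_of_le (hle i) with h' | h'
  · exact h'
  · exfalso
    have : ℓ i (t i u) = ℓ i (t i s) := by rw [h']
    rw [heq i j u, heq i j s] at this
    exact absurd this hj'.ne
end

section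
/- Let k ≥ 1 and let ℓ_1, …, ℓ_k : [0,∞) → [0,∞) be continuous nondecreasing functions with ℓ_i(0) = 0 and lim_{s→∞} ℓ_i(s) = ∞ for each i. Then there exists a collection of nondecreasing continuous functions t_1, …, t_k : [0,∞) → [0,∞) such that t_1(s) + ⋯ + t_k(s) = s for all s ≥ 0 and ℓ_i(t_i(s)) = ℓ_j(t_j(s)) for all i, j and all s ≥ 0 (i.e., the balance problem for ℓ_1, …, ℓ_k has a solution). -/
open scoped NNReal
open Set Filter Topology

noncomputable def bphi (ℓ : ℝ≥0 → ℝ≥0) (u : ℝ≥0) : ℝ≥0 := sSup {x | ℓ x ≤ u}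
noncomputable def bpsi (ℓ : ℝ≥0 → ℝ≥0) (u : ℝ≥0) : ℝ≥0 := sInf {x | u ≤ ℓ x}

section aux

set_option linter.unusedSectionVars false

variable {ℓ : ℝ≥0 → ℝ≥0} (hm : Monotone ℓ) (hc : Continuous ℓ) (h0 : ℓ 0 = 0)
  (ht : Filter.Tendsto ℓ Filter.atTop Filter.atTop)

include ht in
lemma bphi_bddAbove (u : ℝ≥0) : BddAbove {x | ℓ x ≤ u} := by
  obtain ⟨M, hM⟩ := eventually_atTop.1 (ht.eventually_ge_atTop (u + 1))
  refine ⟨M, fun x hx => ?_⟩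
  by_contra hxM
  exact absurd hx (not_le.2 (lt_of_lt_of_le (lt_add_of_pos_right u one_pos)
    (hM x (le_of_not_ge hxM))))

include hc h0 ht in
lemma bsurj (u : ℝ≥0) : ∃ x, ℓ x = u := by
  obtain ⟨y, hy⟩ := (ht.eventually_ge_atTop u).exists
  have : u ∈ Icc (ℓ 0) (ℓ y) := ⟨by simp [h0], hy⟩
  obtain ⟨x, _, hx⟩ := intermediate_value_Icc (zero_le : (0:ℝ≥0) ≤ y) hc.continuousOn this
  exact ⟨x, hx⟩

include hm hc h0 ht in
lemma lbphi (u : ℝ≥0) : ℓ (bphi ℓ u) = u := by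
  have hne : {x | ℓ x ≤ u}.Nonempty := ⟨0, by simp [h0]⟩
  have hcl : IsClosed {x | ℓ x ≤ u} := isClosed_le hc continuous_const
  have hmem := hcl.csSup_mem hne (bphi_bddAbove ht u)
  obtain ⟨x, hx⟩ := bsurj hc h0 ht u
  have hxle : x ≤ bphi ℓ u := le_csSup (bphi_bddAbove ht u) (by simp [hx])
  exact le_antisymm hmem (le_trans hx.symm.le (hm hxle))

include hm hc h0 ht in
lemma lbpsi (u : ℝ≥0) : ℓ (bpsi ℓ u) = u := by
  obtain ⟨x, hx⟩ := bsurj hc h0 ht u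
  have hne : {x | u ≤ ℓ x}.Nonempty := ⟨x, by simp [hx]⟩
  have hcl : IsClosed {x | u ≤ ℓ x} := isClosed_le continuous_const hc
  have hmem := hcl.csInf_mem hne (OrderBot.bddBelow _)
  have hxle : bpsi ℓ u ≤ x := csInf_le (OrderBot.bddBelow _) (by simp [hx])
  exact le_antisymm (le_trans (hm hxle) hx.le) hmem

lemma bphi_mono (ht : Filter.Tendsto ℓ Filter.atTop Filter.atTop) :
    Monotone (bphi ℓ) := fun u u' huu => by
  rcases Set.eq_empty_or_nonempty {x | ℓ x ≤ u} with h | h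
  · unfold bphi
    rw [h, csSup_empty]
    exact zero_le
  · exact csSup_le_csSup (bphi_bddAbove ht u') h (fun x hx => le_trans hx huu)

include hc h0 ht in
lemma bpsi_mono : Monotone (bpsi ℓ) := fun u u' huu => by
  obtain ⟨x, hx⟩ := bsurj hc h0 ht u'
  exact csInf_le_csInf (OrderBot.bddBelow _) ⟨x, by simp [hx]⟩
    (fun x hx => le_trans huu hx)

include hm hc h0 ht in
lemma bpsi_le_bphi (u : ℝ≥0) : bpsi ℓ u ≤ bphi ℓ u := by
  obtain ⟨x, hx⟩ := bsurj hc h0 ht u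
  have h1 : bpsi ℓ u ≤ x := csInf_le (OrderBot.bddBelow _) (by simp [hx])
  have h2 : x ≤ bphi ℓ u := le_csSup (bphi_bddAbove ht u) (by simp [hx])
  exact h1.trans h2

include hm hc h0 ht in
lemma bphi_le_bpsi {u u' : ℝ≥0} (h : u < u') : bphi ℓ u ≤ bpsi ℓ u' := by
  obtain ⟨x, hx⟩ := bsurj hc h0 ht u'
  refine le_csInf ⟨x, by simp [hx]⟩ (fun y hy => ?_)
  by_contra hlt
  have := hm (le_of_lt (lt_of_not_ge hlt))
  rw [lbphi hm hc h0 ht] at this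
  exact absurd (le_trans hy this) (not_le.2 h)

include hm hc h0 ht in
lemma bphi_right_cont (u : ℝ≥0) : sInf (bphi ℓ '' Ioi u) = bphi ℓ u := by
  refine le_antisymm ?_ (le_csInf (nonempty_Ioi.image _)
    (by rintro x ⟨v, hv, rfl⟩; exact bphi_mono ht (le_of_lt hv)))
  have hmem : ℓ (sInf (bphi ℓ '' Ioi u)) ≤ u := by
    by_contra hlt
    obtain ⟨v, hv1, hv2⟩ := exists_between (lt_of_not_ge hlt)
    have h1 : sInf (bphi ℓ '' Ioi u) ≤ bphi ℓ v :=
      csInf_le (OrderBot.bddBelow _) (mem_image_of_mem _ hv1)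
    have := hm h1
    rw [lbphi hm hc h0 ht] at this
    exact absurd this (not_le.2 hv2)
  exact le_csSup (bphi_bddAbove ht u) hmem

include hm hc h0 ht in
lemma bpsi_left_cont {u : ℝ≥0} (hu : u ≠ 0) : sSup (bpsi ℓ '' Iio u) = bpsi ℓ u := by
  have hne : (Iio u).Nonempty := ⟨0, pos_iff_ne_zero.2 hu⟩
  have hbdd : BddAbove (bpsi ℓ '' Iio u) :=
    ⟨bpsi ℓ u, by rintro x ⟨v, hv, rfl⟩; exact bpsi_mono hc h0 ht (le_of_lt hv)⟩
  refine le_antisymm (csSup_le (hne.image _)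
    (by rintro x ⟨v, hv, rfl⟩; exact bpsi_mono hc h0 ht (le_of_lt hv))) ?_
  have hmem : u ≤ ℓ (sSup (bpsi ℓ '' Iio u)) := by
    by_contra hlt
    obtain ⟨v, hv1, hv2⟩ := exists_between (lt_of_not_ge hlt)
    have h1 : bpsi ℓ v ≤ sSup (bpsi ℓ '' Iio u) := le_csSup hbdd (mem_image_of_mem _ hv2)
    have := hm h1
    rw [lbpsi hm hc h0 ht] at this
    exact absurd (lt_of_le_of_lt this hv1) (by simp)
  exact csInf_le (OrderBot.bddBelow _) hmem

end aux

/-- If the `ℓ i : [0,∞) → [0,∞)` are continuous nondecreasing, vanish at `0` and tend to `∞`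
at `∞`, then the balance problem for `ℓ 1, …, ℓ k` has a solution consisting of nondecreasing
continuous functions. -/
theorem stmt3 {k : ℕ} (hk : 1 ≤ k)
    (ℓ : Fin k → ℝ≥0 → ℝ≥0) (hmono : ∀ i, Monotone (ℓ i))
    (hcont : ∀ i, Continuous (ℓ i)) (h0 : ∀ i, ℓ i 0 = 0)
    (htop : ∀ i, Filter.Tendsto (ℓ i) Filter.atTop Filter.atTop) :
    ∃ t : Fin k → ℝ≥0 → ℝ≥0, IsBalanceSolution ℓ t ∧ ∀ i, Continuous (t i) := by
  classical
  haveI : Nonempty (Fin k) := Fin.pos_iff_nonempty.mp hk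
  obtain ⟨i0⟩ := (inferInstance : Nonempty (Fin k))
  set φ : Fin k → ℝ≥0 → ℝ≥0 := fun i => bphi (ℓ i) with hφ
  set ψ : Fin k → ℝ≥0 → ℝ≥0 := fun i => bpsi (ℓ i) with hψ
  set Φ : ℝ≥0 → ℝ≥0 := fun u => ∑ i, φ i u with hΦ
  set Ψ : ℝ≥0 → ℝ≥0 := fun u => ∑ i, ψ i u with hΨ
  have hlφ : ∀ i u, ℓ i (φ i u) = u := fun i u =>
    lbphi (hmono i) (hcont i) (h0 i) (htop i) u
  have hlψ : ∀ i u, ℓ i (ψ i u) = u := fun i u =>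
    lbpsi (hmono i) (hcont i) (h0 i) (htop i) u
  have hψφ : ∀ i u, ψ i u ≤ φ i u := fun i u =>
    bpsi_le_bphi (hmono i) (hcont i) (h0 i) (htop i) u
  have hφψ : ∀ i {u u'}, u < u' → φ i u ≤ ψ i u' := fun i _ _ h =>
    bphi_le_bpsi (hmono i) (hcont i) (h0 i) (htop i) h
  have hφm : ∀ i, Monotone (φ i) := fun i => bphi_mono (htop i)
  have hψm : ∀ i, Monotone (ψ i) := fun i => bpsi_mono (hcont i) (h0 i) (htop i)
  have hΦm : Monotone Φ := fun u u' h => Finset.sum_le_sum fun i _ => hφm i h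
  have hΨΦ : ∀ u, Ψ u ≤ Φ u := fun u => Finset.sum_le_sum fun i _ => hψφ i u
  -- the level set is nonempty
  have hA : ∀ s : ℝ≥0, {u | s ≤ Φ u}.Nonempty := by
    intro s
    refine ⟨∑ i, ℓ i s, ?_⟩
    have h1 : s ≤ φ i0 (∑ i, ℓ i s) := by
      refine le_csSup (bphi_bddAbove (htop i0) _) ?_
      exact Finset.single_le_sum (f := fun i => ℓ i s) (fun i _ => zero_le)
        (Finset.mem_univ i0)
    exact le_trans h1 (Finset.single_le_sum (f := fun i => φ i (∑ j, ℓ j s))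
      (fun i _ => zero_le) (Finset.mem_univ i0))
  set U : ℝ≥0 → ℝ≥0 := fun s => sInf {u | s ≤ Φ u} with hU
  have hUm : Monotone U := fun s s' h =>
    csInf_le_csInf (OrderBot.bddBelow _) (hA s') (fun u hu => le_trans h hu)
  -- key inequality 1 : s ≤ Φ (U s)
  have key1 : ∀ s, s ≤ Φ (U s) := by
    intro s
    have hIoi : Ioi (U s) ⊆ {u | s ≤ Φ u} := by
      intro v hv
      obtain ⟨u, hu, huv⟩ := exists_lt_of_csInf_lt (hA s) hv
      exact le_trans hu (hΦm (le_of_lt huv))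
    have htend : Filter.Tendsto Φ (𝓝[>] (U s)) (𝓝 (Φ (U s))) := by
      apply tendsto_finset_sum
      intro i _
      have := (hφm i).tendsto_nhdsGT (U s)
      rwa [bphi_right_cont (hmono i) (hcont i) (h0 i) (htop i)] at this
    exact ge_of_tendsto htend (eventually_nhdsWithin_of_forall hIoi)
  -- key inequality 2 : Ψ (U s) ≤ s
  have key2 : ∀ s, Ψ (U s) ≤ s := by
    intro s
    rcases eq_or_ne (U s) 0 with h | h
    · rw [h]
      have : ∀ i, ψ i 0 = 0 := fun i =>
        le_antisymm (csInf_le (OrderBot.bddBelow _) (by simp)) zero_le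
      simp [hΨ, this]
    · haveI : (𝓝[<] (U s)).NeBot := nhdsWithin_Iio_self_neBot' ⟨0, pos_iff_ne_zero.2 h⟩
      have htend : Filter.Tendsto Ψ (𝓝[<] (U s)) (𝓝 (Ψ (U s))) := by
        apply tendsto_finset_sum
        intro i _
        have := (hψm i).tendsto_nhdsLT (U s)
        rwa [bpsi_left_cont (hmono i) (hcont i) (h0 i) (htop i) h] at this
      refine le_of_tendsto htend (eventually_nhdsWithin_of_forall fun u hu => ?_)
      have hu2 : Φ u < s := by
        by_contra hcon
        have hUle : U s ≤ u :=
          csInf_le (OrderBot.bddBelow _) (show s ≤ Φ u from le_of_not_gt hcon)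
        exact absurd hUle (not_le.2 (Set.mem_Iio.1 hu))
      exact le_of_lt (lt_of_le_of_lt (hΨΦ u) hu2)
  -- the solution
  set r : ℝ≥0 → ℝ≥0 := fun s => (s - Ψ (U s)) / (Φ (U s) - Ψ (U s)) with hr
  have hr1 : ∀ s, r s ≤ 1 := by
    intro s
    rcases eq_or_ne (Φ (U s) - Ψ (U s)) 0 with h | h
    · simp [hr, h]
    · rw [hr]
      exact (div_le_one (pos_iff_ne_zero.2 h)).2 (tsub_le_tsub_right (key1 s) _)
  have hrD : ∀ s, r s * (Φ (U s) - Ψ (U s)) = s - Ψ (U s) := by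
    intro s
    rcases eq_or_ne (Φ (U s) - Ψ (U s)) 0 with h | h
    · have hEq : Φ (U s) = Ψ (U s) := le_antisymm (tsub_eq_zero_iff_le.1 h) (hΨΦ _)
      rw [h, mul_zero, tsub_eq_zero_iff_le.2 (hEq ▸ key1 s)]
    · rw [hr, div_mul_cancel₀ _ h]
  set t : Fin k → ℝ≥0 → ℝ≥0 := fun i s => ψ i (U s) + r s * (φ i (U s) - ψ i (U s))
    with htdef
  have httop : ∀ i s, t i s ≤ φ i (U s) := by
    intro i s
    calc t i s ≤ ψ i (U s) + 1 * (φ i (U s) - ψ i (U s)) :=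
          add_le_add_right (mul_le_mul_of_nonneg_right (hr1 s) zero_le) _
      _ = φ i (U s) := by rw [one_mul, add_tsub_cancel_of_le (hψφ i (U s))]
  have htbot : ∀ i s, ψ i (U s) ≤ t i s := fun i s => le_self_add
  have hlt : ∀ i s, ℓ i (t i s) = U s := fun i s =>
    le_antisymm (by rw [← hlφ i (U s)]; exact hmono i (httop i s))
      (by rw [← hlψ i (U s)]; exact hmono i (htbot i s))
  have htsum : ∀ s, ∑ i, t i s = s := by
    intro s
    have h1 : ∑ i, (φ i (U s) - ψ i (U s)) = Φ (U s) - Ψ (U s) :=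
      Finset.sum_tsub_distrib _ (fun i _ => hψφ i (U s))
    calc ∑ i, t i s = Ψ (U s) + r s * ∑ i, (φ i (U s) - ψ i (U s)) := by
          rw [Finset.sum_add_distrib, ← Finset.mul_sum]
      _ = Ψ (U s) + (s - Ψ (U s)) := by rw [h1, hrD s]
      _ = s := add_tsub_cancel_of_le (key2 s)
  have htm : ∀ i, Monotone (t i) := by
    intro i s s' hss
    rcases eq_or_lt_of_le (hUm hss) with h | h
    · have hrle : r s ≤ r s' := by
        show (s - Ψ (U s)) / (Φ (U s) - Ψ (U s)) ≤ (s' - Ψ (U s')) / (Φ (U s') - Ψ (U s'))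
        rw [← h, div_eq_mul_inv, div_eq_mul_inv]
        exact mul_le_mul_left (tsub_le_tsub_right hss _) _
      show ψ i (U s) + r s * (φ i (U s) - ψ i (U s)) ≤
        ψ i (U s') + r s' * (φ i (U s') - ψ i (U s'))
      rw [← h]
      exact add_le_add_right (mul_le_mul_left hrle _) _
    · exact le_trans (httop i s) (le_trans (hφψ i h) (htbot i s'))
  -- Lipschitz bound, hence continuity
  have hlip : ∀ i s s', s ≤ s' → t i s' - t i s ≤ s' - s := by
    intro i s s' hss
    have h1 : t i s' - t i s ≤ ∑ j, (t j s' - t j s) :=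
      Finset.single_le_sum (f := fun j => t j s' - t j s)
        (fun j _ => zero_le) (Finset.mem_univ i)
    have h2 : ∑ j, (t j s' - t j s) = s' - s := by
      rw [Finset.sum_tsub_distrib _ (fun j _ => htm j hss), htsum, htsum]
    exact h2 ▸ h1
  refine ⟨t, ⟨htm, htsum, fun i j s => by rw [hlt i s, hlt j s]⟩, fun i => ?_⟩
  have : LipschitzWith 1 (t i) := by
    intro x y
    rw [edist_nndist, edist_nndist, ENNReal.coe_one, one_mul, ENNReal.coe_le_coe,
      NNReal.nndist_eq, NNReal.nndist_eq]
    rcases le_total x y with h | h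
    · exact max_le (le_trans (tsub_eq_zero_iff_le.2 (htm i h) ▸ zero_le) (le_max_left _ _))
        (le_trans (hlip i x y h) (le_max_right _ _))
    · exact max_le (le_trans (hlip i y x h) (le_max_left _ _))
        (le_trans (tsub_eq_zero_iff_le.2 (htm i h) ▸ zero_le) (le_max_right _ _))
  exact this.continuous
end

section
/- Let k ≥ 1 and let ℓ_1, …, ℓ_k : [0,∞) → [0,∞) be continuous nondecreasing functions with ℓ_i(0) = 0 and lim_{s→∞} ℓ_i(s) = ∞ for each i, and assume ℓ_1, …, ℓ_k have no common levels of constancy. Define 𝓀_i(s) := inf{u ≥ 0 : ℓ_i(u) > s} (the generalized inverse of ℓ_i), 𝓀 := 𝓀_1 + ⋯ + 𝓀_k, 𝔩(s) := inf{u ≥ 0 : 𝓀(u) > s} (the generalized inverse of 𝓀), and the jump Δ𝓀_i(u) := 𝓀_i(u) − lim_{v↑u} 𝓀_i(v) for u > 0 and Δ𝓀_i(0) := 𝓀_i(0). Then the balance problem for ℓ_1, …, ℓ_k has a unique solution (t_1, …, t_k), this solution satisfies ℓ_i(t_i(s)) = 𝔩(s) for every index i and every s ≥ 0, and it is given explicitly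 by t_i(s) = 𝓀_i(𝔩(s)) + 1_{{Δ𝓀_i(𝔩(s)) > 0}} · (s − 𝓀(𝔩(s))) for all s ≥ 0 and all i. -/
open scoped NNReal

/-- The generalized (right-continuous) inverse `f⁻¹(s) = inf {u ≥ 0 : f u > s}`. -/
noncomputable def genInv (f : ℝ≥0 → ℝ≥0) (s : ℝ≥0) : ℝ≥0 :=
  sInf {u : ℝ≥0 | s < f u}

/-- The left limit `lim_{v ↑ u} f v` of a nondecreasing function (equal to `0` at `u = 0`). -/
noncomputable def leftLimit (f : ℝ≥0 → ℝ≥0) (u : ℝ≥0) : ℝ≥0 :=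
  sSup (f '' Set.Iio u)

/-- The jump `Δf(u) = f(u) - lim_{v ↑ u} f(v)` of a nondecreasing function,
with `Δf(0) = f(0)`. -/
noncomputable def jumpAt (f : ℝ≥0 → ℝ≥0) (u : ℝ≥0) : ℝ≥0 :=
  f u - leftLimit f u

section Aux

open Filter Set Topology

lemma genInv_le' {f : ℝ≥0 → ℝ≥0} {s u : ℝ≥0} (h : s < f u) : genInv f s ≤ u :=
  csInf_le (OrderBot.bddBelow _) h

lemma le_of_lt_genInv' {f : ℝ≥0 → ℝ≥0} {s u : ℝ≥0} (h : u < genInv f s) : f u ≤ s := by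
  by_contra hc
  exact absurd (genInv_le' (not_le.1 hc)) (not_le.2 h)

lemma set_nonempty' {f : ℝ≥0 → ℝ≥0} (htop : Tendsto f atTop atTop) (s : ℝ≥0) :
    {u : ℝ≥0 | s < f u}.Nonempty := by
  obtain ⟨u, hu⟩ := (htop.eventually (eventually_gt_atTop s)).exists
  exact ⟨u, hu⟩

lemma genInv_mono' {f : ℝ≥0 → ℝ≥0} (htop : Tendsto f atTop atTop) : Monotone (genInv f) := by
  intro s s' h
  exact csInf_le_csInf (OrderBot.bddBelow _) (set_nonempty' htop s')
    (fun u hu => lt_of_le_of_lt h hu)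

lemma apply_genInv' {f : ℝ≥0 → ℝ≥0} (hm : Monotone f) (hc : Continuous f) (h0 : f 0 = 0)
    (htop : Tendsto f atTop atTop) (s : ℝ≥0) : f (genInv f s) = s := by
  set g := genInv f s with hg
  have hten : Tendsto f (𝓝 g) (𝓝 (f g)) := hc.continuousAt
  have h1 : s ≤ f g := by
    have hten' : Tendsto f (𝓝[>] g) (𝓝 (f g)) := hten.mono_left nhdsWithin_le_nhds
    refine ge_of_tendsto hten' ?_
    filter_upwards [self_mem_nhdsWithin] with v hv
    obtain ⟨w, hw, hwv⟩ := exists_lt_of_csInf_lt (set_nonempty' htop s) hv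
    exact le_trans hw.le (hm hwv.le)
  have h2 : f g ≤ s := by
    rcases eq_or_lt_of_le (zero_le : (0:ℝ≥0) ≤ g) with h | h
    · rw [← h, h0]; exact zero_le
    · have hne : (𝓝[<] g).NeBot := nhdsWithin_Iio_self_neBot' ⟨0, h⟩
      have hten' : Tendsto f (𝓝[<] g) (𝓝 (f g)) := hten.mono_left nhdsWithin_le_nhds
      refine le_of_tendsto hten' ?_
      filter_upwards [self_mem_nhdsWithin] with v hv
      exact le_of_lt_genInv' hv
  exact le_antisymm h2 h1

lemma genInv_strictMono' {f : ℝ≥0 → ℝ≥0} (hm : Monotone f) (hc : Continuous f) (h0 : f 0 = 0)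
    (htop : Tendsto f atTop atTop) : StrictMono (genInv f) := by
  refine (genInv_mono' htop).strictMono_of_injective (fun a b hab => ?_)
  have h := apply_genInv' hm hc h0 htop a
  rw [hab, apply_genInv' hm hc h0 htop b] at h
  exact h.symm

/-- right continuity of the generalized inverse -/
lemma genInv_right_cont' {f : ℝ≥0 → ℝ≥0} (htop : Tendsto f atTop atTop) {u t : ℝ≥0}
    (h : genInv f u < t) : ∃ u' > u, genInv f u' ≤ t := by
  obtain ⟨w, hw, hwt⟩ := exists_lt_of_csInf_lt (set_nonempty' htop u) h
  obtain ⟨u', hu1, hu2⟩ := exists_between (show u < f w from hw)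
  exact ⟨u', hu1, le_trans (genInv_le' hu2) hwt.le⟩

lemma leftLimit_le' {f : ℝ≥0 → ℝ≥0} (hm : Monotone f) (u : ℝ≥0) : leftLimit f u ≤ f u := by
  rcases eq_or_ne u 0 with rfl | h
  · have he : Iio (0:ℝ≥0) = ∅ := by ext x; simp
    simp [leftLimit, he]
  · exact csSup_le (⟨f 0, mem_image_of_mem f ((zero_le : (0:ℝ≥0) ≤ u).lt_of_ne (Ne.symm h))⟩)
      (by rintro x ⟨v, hv, rfl⟩; exact hm hv.le)

lemma tendsto_leftLimit' {f : ℝ≥0 → ℝ≥0} (hm : Monotone f) (u : ℝ≥0) :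
    Tendsto f (𝓝[<] u) (𝓝 (leftLimit f u)) := hm.tendsto_nhdsLT u

lemma leftLimit_zero' (f : ℝ≥0 → ℝ≥0) : leftLimit f 0 = 0 := by
  have he : Iio (0:ℝ≥0) = ∅ := by ext x; simp
  simp [leftLimit, he]

lemma leftLimit_sum' {k : ℕ} (f : Fin k → ℝ≥0 → ℝ≥0) (hm : ∀ i, Monotone (f i)) (u : ℝ≥0) :
    leftLimit (fun v => ∑ i, f i v) u = ∑ i, leftLimit (f i) u := by
  rcases eq_or_lt_of_le (zero_le : (0:ℝ≥0) ≤ u) with h | h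
  · rw [← h, leftLimit_zero']
    rw [Finset.sum_congr rfl (fun i _ => leftLimit_zero' (f i))]
    simp
  · haveI : (𝓝[<] u).NeBot := nhdsWithin_Iio_self_neBot' ⟨0, h⟩
    have h1 : Tendsto (fun v => ∑ i, f i v) (𝓝[<] u)
        (𝓝 (leftLimit (fun v => ∑ i, f i v) u)) :=
      tendsto_leftLimit' (fun a b hab => Finset.sum_le_sum (fun i _ => hm i hab)) u
    have h2 : Tendsto (fun v => ∑ i, f i v) (𝓝[<] u) (𝓝 (∑ i, leftLimit (f i) u)) :=
      tendsto_finset_sum _ (fun i _ => tendsto_leftLimit' (hm i) u)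
    exact tendsto_nhds_unique h1 h2

end Aux

open Filter Set Topology in
/-- Explicit solution of the balance problem: with `𝓀 i = genInv (ℓ i)`,
`kk = ∑ i, 𝓀 i` and `ll = genInv kk`, the balance problem for `ℓ` has a unique solution `t`,
this solution satisfies `ℓ i (t i s) = ll s`, and
`t i s = 𝓀 i (ll s) + 1_{Δ(𝓀 i)(ll s) > 0} ⬝ (s - kk (ll s))`. -/
theorem stmt4 {k : ℕ} (hk : 1 ≤ k)
    (ℓ : Fin k → ℝ≥0 → ℝ≥0) (hmono : ∀ i, Monotone (ℓ i))
    (hcont : ∀ i, Continuous (ℓ i)) (h0 : ∀ i, ℓ i 0 = 0)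
    (htop : ∀ i, Filter.Tendsto (ℓ i) Filter.atTop Filter.atTop)
    (hnc : NoCommonLevelsOfConstancy ℓ)
    (kk : ℝ≥0 → ℝ≥0) (hkk : ∀ u, kk u = ∑ i, genInv (ℓ i) u)
    (ll : ℝ≥0 → ℝ≥0) (hll : ll = genInv kk) :
    ∃ t : Fin k → ℝ≥0 → ℝ≥0,
      IsBalanceSolution ℓ t ∧
      (∀ t', IsBalanceSolution ℓ t' → t' = t) ∧
      (∀ i s, ℓ i (t i s) = ll s) ∧
      (∀ i s, (t i s : ℝ) =
        (genInv (ℓ i) (ll s) : ℝ) +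
          (if 0 < jumpAt (genInv (ℓ i)) (ll s) then (1 : ℝ) else 0) *
            ((s : ℝ) - (kk (ll s) : ℝ))) := by
  haveI : Nonempty (Fin k) := ⟨⟨0, hk⟩⟩
  set K : Fin k → ℝ≥0 → ℝ≥0 := fun i => genInv (ℓ i) with hK
  have hKfold : ∀ i, genInv (ℓ i) = K i := fun i => rfl
  have hKapp : ∀ i u, ℓ i (K i u) = u := fun i u =>
    apply_genInv' (hmono i) (hcont i) (h0 i) (htop i) u
  have hKmono : ∀ i, Monotone (K i) := fun i => genInv_mono' (htop i)
  have hKtop : ∀ i, Tendsto (K i) atTop atTop := by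
    intro i
    rw [tendsto_atTop]
    intro b
    filter_upwards [eventually_ge_atTop (ℓ i b + 1)] with u hu
    by_contra hcon
    push_neg at hcon
    have h1 : u ≤ ℓ i b := by
      have := hmono i hcon.le
      rwa [hKapp i u] at this
    exact absurd h1 (not_le.2 (lt_of_lt_of_le (lt_add_one _) hu))
  have hkkmono : Monotone kk := by
    intro a b hab
    rw [hkk a, hkk b]
    exact Finset.sum_le_sum (fun i _ => hKmono i hab)
  have hkkstrict : StrictMono kk := by
    intro a b hab
    rw [hkk a, hkk b]
    have hlt : ∀ i ∈ (Finset.univ : Finset (Fin k)), K i a < K i b :=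
      fun i _ => genInv_strictMono' (hmono i) (hcont i) (h0 i) (htop i) hab
    refine Finset.sum_lt_sum_of_nonempty ?_ hlt
    exact Finset.univ_nonempty
  have hkktop : Tendsto kk atTop atTop := by
    refine tendsto_atTop_mono (fun u => ?_) (hKtop ⟨0, hk⟩)
    rw [hkk u]
    exact Finset.single_le_sum (f := fun i => genInv (ℓ i) u) (fun j _ => zero_le) (Finset.mem_univ _)
  -- basic facts about ll
  have hP2 : ∀ s u, u < ll s → kk u ≤ s := by
    intro s u h
    rw [hll] at h
    exact le_of_lt_genInv' h
  have hP3 : ∀ s u, ll s < u → s < kk u := by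
    intro s u h
    rw [hll] at h
    obtain ⟨w, hw, hwu⟩ := exists_lt_of_csInf_lt (set_nonempty' hkktop s) h
    exact lt_of_lt_of_le hw (hkkmono hwu.le)
  have hllmono : Monotone ll := by
    rw [hll]; exact genInv_mono' hkktop
  have hP4 : ∀ s, s ≤ kk (ll s) := by
    intro s
    by_contra hcon
    push_neg at hcon
    set u := ll s with hu
    set d := s - kk u with hdd
    have hdpos : 0 < d := tsub_pos_iff_lt.2 hcon
    set ε := d / ((k : ℝ≥0) + 1) with hε
    have hk1 : (0:ℝ≥0) < (k:ℝ≥0) + 1 := by positivity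
    have hεpos : 0 < ε := by
      rw [hε]
      exact div_pos hdpos hk1
    have hchoice : ∀ i, ∃ u' > u, K i u' ≤ K i u + ε := fun i =>
      genInv_right_cont' (htop i) (lt_add_of_pos_right _ hεpos)
    choose u' hu'gt hu'le using hchoice
    set w := Finset.univ.inf' Finset.univ_nonempty u' with hw
    have hwgt : u < w := by
      rw [hw, Finset.lt_inf'_iff]
      exact fun i _ => hu'gt i
    have hwle : ∀ i, K i w ≤ K i u + ε := fun i =>
      le_trans (hKmono i (Finset.inf'_le _ (Finset.mem_univ i))) (hu'le i)
    have h1 : kk w ≤ kk u + (k : ℝ≥0) * ε := by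
      rw [hkk w]
      calc ∑ i, K i w ≤ ∑ _i : Fin k, (K _i u + ε) := Finset.sum_le_sum (fun i _ => hwle i)
        _ = kk u + (k : ℝ≥0) * ε := by
            rw [Finset.sum_add_distrib, Finset.sum_const, Finset.card_univ, Fintype.card_fin,
              nsmul_eq_mul, hkk u]
    have h2 : (k : ℝ≥0) * ε < d := by
      rw [hε, mul_div_assoc']
      rw [div_lt_iff₀ hk1]
      rw [mul_add, mul_one, mul_comm (d : ℝ≥0) (k : ℝ≥0)]
      exact lt_add_of_pos_right _ hdpos
    have h3 : kk w < s := by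
      refine lt_of_le_of_lt h1 ?_
      calc kk u + (k : ℝ≥0) * ε < kk u + d := add_lt_add_right h2 _
        _ = s := add_tsub_cancel_of_le hcon.le
    exact absurd (hP3 s w hwgt) (not_lt.2 h3.le)
  have hP5 : ∀ s, ∑ i, leftLimit (K i) (ll s) ≤ s := by
    intro s
    have hsum := leftLimit_sum' K hKmono (ll s)
    have hfun : (fun v => ∑ i, K i v) = kk := funext fun v => (hkk v).symm
    rw [hfun] at hsum
    rw [← hsum]
    rcases eq_or_lt_of_le (zero_le : (0:ℝ≥0) ≤ ll s) with h | h
    · rw [← h, leftLimit_zero']; exact zero_le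
    · haveI : (𝓝[<] (ll s)).NeBot := nhdsWithin_Iio_self_neBot' ⟨0, h⟩
      refine le_of_tendsto (tendsto_leftLimit' hkkmono (ll s)) ?_
      filter_upwards [self_mem_nhdsWithin] with v hv
      exact hP2 s v hv
  have hllK : ∀ i u, ℓ i (leftLimit (K i) u) = u := by
    intro i u
    rcases eq_or_lt_of_le (zero_le : (0:ℝ≥0) ≤ u) with h | h
    · rw [← h, leftLimit_zero', h0 i]
    · haveI : (𝓝[<] u).NeBot := nhdsWithin_Iio_self_neBot' ⟨0, h⟩
      have h1 : Tendsto (fun v => ℓ i (K i v)) (𝓝[<] u) (𝓝 (ℓ i (leftLimit (K i) u))) :=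
        ((hcont i).continuousAt.tendsto).comp (tendsto_leftLimit' (hKmono i) u)
      have h2 : Tendsto (fun v => ℓ i (K i v)) (𝓝[<] u) (𝓝 u) := by
        have he : (fun v => ℓ i (K i v)) = fun v => v := funext fun v => hKapp i v
        rw [he]
        exact tendsto_id.mono_left nhdsWithin_le_nhds
      exact tendsto_nhds_unique h1 h2
  have hconst : ∀ i u v, leftLimit (K i) u ≤ v → v ≤ K i u → ℓ i v = u := by
    intro i u v h1 h2
    refine le_antisymm ?_ ?_
    · exact (hmono i h2).trans_eq (hKapp i u)
    · exact (hllK i u).symm.trans_le (hmono i h1)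
  have hnojump_val : ∀ i u, jumpAt (K i) u = 0 → leftLimit (K i) u = K i u := by
    intro i u h
    simp only [jumpAt] at h
    exact le_antisymm (leftLimit_le' (hKmono i) u) (tsub_eq_zero_iff_le.1 h)
  have hone : ∀ i j u, i ≠ j → 0 < jumpAt (K i) u → 0 < jumpAt (K j) u → False := by
    intro i j u hij hi hj
    simp only [jumpAt] at hi hj
    have hia : leftLimit (K i) u < K i u := tsub_pos_iff_lt.1 hi
    have hja : leftLimit (K j) u < K j u := tsub_pos_iff_lt.1 hj
    refine hnc ⟨i, j, leftLimit (K i) u, K i u, leftLimit (K j) u, K j u, hij, hia, hja, ?_, ?_, ?_⟩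
    · rw [hllK i u, hKapp i u]
    · rw [hKapp i u, hllK j u]
    · rw [hllK j u, hKapp j u]
  have hd : ∀ i s, 0 < jumpAt (K i) (ll s) → kk (ll s) - s ≤ jumpAt (K i) (ll s) := by
    intro i s hi
    set u := ll s with hu
    set a := leftLimit (K i) u with ha'
    have ha : a ≤ K i u := leftLimit_le' (hKmono i) u
    have heq : ∀ j ∈ Finset.univ.erase i, leftLimit (K j) u = K j u := by
      intro j hj
      have hji : j ≠ i := Finset.ne_of_mem_erase hj
      have hz : jumpAt (K j) u = 0 := by
        by_contra hc
        exact hone j i u hji (pos_iff_ne_zero.2 hc) hi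
      exact hnojump_val j u hz
    have hsum : a + ∑ j ∈ Finset.univ.erase i, K j u ≤ s := by
      have h5 := hP5 s
      rw [← Finset.add_sum_erase _ _ (Finset.mem_univ i)] at h5
      rwa [Finset.sum_congr rfl heq] at h5
    have hkku : kk u = K i u + ∑ j ∈ Finset.univ.erase i, K j u := by
      rw [hkk u]
      exact (Finset.add_sum_erase _ (fun j => K j u) (Finset.mem_univ i)).symm
    simp only [jumpAt, ← ha']
    rw [tsub_le_iff_right]
    calc kk u = K i u + ∑ j ∈ Finset.univ.erase i, K j u := hkku
      _ = (K i u - a) + a + ∑ j ∈ Finset.univ.erase i, K j u := by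
          rw [tsub_add_cancel_of_le ha]
      _ = (K i u - a) + (a + ∑ j ∈ Finset.univ.erase i, K j u) := by rw [add_assoc]
      _ ≤ (K i u - a) + s := add_le_add_right hsum _
  have hnojump_all : ∀ s, (∀ i, jumpAt (K i) (ll s) = 0) → kk (ll s) = s := by
    intro s hall
    refine le_antisymm ?_ (hP4 s)
    calc kk (ll s) = ∑ i, K i (ll s) := hkk _
      _ = ∑ i, leftLimit (K i) (ll s) :=
          Finset.sum_congr rfl (fun i _ => (hnojump_val i _ (hall i)).symm)
      _ ≤ s := hP5 s
  -- the candidate solution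
  set t : Fin k → ℝ≥0 → ℝ≥0 := fun i s =>
    K i (ll s) - (if 0 < jumpAt (K i) (ll s) then kk (ll s) - s else 0) with ht
  have hthigh : ∀ i s, t i s ≤ K i (ll s) := fun i s => tsub_le_self
  have htpos : ∀ i s, 0 < jumpAt (K i) (ll s) → t i s = K i (ll s) - (kk (ll s) - s) := by
    intro i s hj
    simp only [ht, if_pos hj]
  have htneg : ∀ i s, ¬ 0 < jumpAt (K i) (ll s) → t i s = K i (ll s) := by
    intro i s hj
    simp only [ht, if_neg hj, tsub_zero]
  have htlow : ∀ i s, leftLimit (K i) (ll s) ≤ t i s := by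
    intro i s
    by_cases hj : 0 < jumpAt (K i) (ll s)
    · have h1 := hd i s hj
      rw [htpos i s hj]
      calc leftLimit (K i) (ll s) = K i (ll s) - jumpAt (K i) (ll s) := by
            simp only [jumpAt]
            rw [tsub_tsub_cancel_of_le (leftLimit_le' (hKmono i) _)]
        _ ≤ K i (ll s) - (kk (ll s) - s) := tsub_le_tsub_left h1 _
    · rw [htneg i s hj]
      exact leftLimit_le' (hKmono i) _
  have htsum : ∀ s, ∑ i, t i s = s := by
    intro s
    by_cases hex : ∃ i, 0 < jumpAt (K i) (ll s)
    · obtain ⟨i, hi⟩ := hex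
      have hothers : ∀ j ∈ Finset.univ.erase i, t j s = K j (ll s) := by
        intro j hj
        refine htneg j s (fun hc => hone j i _ (Finset.ne_of_mem_erase hj) hc hi)
      have hd1 : kk (ll s) - s ≤ K i (ll s) :=
        le_trans (hd i s hi) (by simp only [jumpAt]; exact tsub_le_self)
      have hsle : s ≤ kk (ll s) := hP4 s
      have hfold : K i (ll s) + ∑ x ∈ Finset.univ.erase i, K x (ll s) = kk (ll s) := by
        rw [hkk (ll s)]
        exact Finset.add_sum_erase _ (fun j => K j (ll s)) (Finset.mem_univ i)
      rw [← Finset.add_sum_erase _ _ (Finset.mem_univ i), Finset.sum_congr rfl hothers,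
        htpos i s hi, tsub_add_eq_add_tsub hd1, hfold, tsub_tsub_cancel_of_le hsle]
    · push_neg at hex
      have hall : ∀ i, jumpAt (K i) (ll s) = 0 := fun i => nonpos_iff_eq_zero.1 (hex i)
      rw [Finset.sum_congr rfl (fun i _ => htneg i s (by rw [hall i]; exact lt_irrefl 0)),
        ← hkk (ll s)]
      exact hnojump_all s hall
  have htlevel : ∀ i s, ℓ i (t i s) = ll s := fun i s =>
    hconst i (ll s) (t i s) (htlow i s) (hthigh i s)
  have htmono : ∀ i, Monotone (t i) := by
    intro i s s' hss'
    have hLmono : ll s ≤ ll s' := hllmono hss'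
    rcases eq_or_lt_of_le hLmono with he | hlt
    · simp only [ht, ← he]
      split_ifs with h
      · exact tsub_le_tsub_left (tsub_le_tsub_left hss' _) _
      · exact le_refl _
    · calc t i s ≤ K i (ll s) := hthigh i s
        _ ≤ leftLimit (K i) (ll s') :=
            le_csSup ((hKmono i).map_bddAbove bddAbove_Iio) ⟨ll s, hlt, rfl⟩
        _ ≤ t i s' := htlow i s'
  -- uniqueness
  have huniq : ∀ t', IsBalanceSolution ℓ t' → t' = t := by
    rintro t' ⟨ht'mono, ht'sum, ht'lev⟩
    funext i s
    set i0 : Fin k := ⟨0, hk⟩ with hi0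
    set c := ℓ i0 (t' i0 s) with hc
    have hcl : ∀ j, ℓ j (t' j s) = c := fun j => ht'lev j i0 s
    have hub : ∀ j, t' j s ≤ K j c := by
      intro j
      by_contra hcon
      push_neg at hcon
      obtain ⟨w, hw, hw2⟩ := exists_lt_of_csInf_lt (set_nonempty' (htop j) c) hcon
      have h1 : ℓ j w ≤ ℓ j (t' j s) := hmono j hw2.le
      rw [hcl j] at h1
      exact absurd (lt_of_lt_of_le hw h1) (lt_irrefl c)
    have hlb : ∀ j, leftLimit (K j) c ≤ t' j s := by
      intro j
      rcases eq_or_lt_of_le (zero_le : (0:ℝ≥0) ≤ c) with h | h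
      · rw [← h, leftLimit_zero']; exact zero_le
      · refine csSup_le ⟨K j 0, mem_image_of_mem _ h⟩ ?_
        rintro x ⟨w, hw, rfl⟩
        by_contra hcon
        push_neg at hcon
        have h1 : ℓ j (t' j s) ≤ w := le_of_lt_genInv' hcon
        rw [hcl j] at h1
        exact absurd (lt_of_le_of_lt h1 hw) (lt_irrefl c)
    have hsub : s ≤ kk c := by
      rw [← ht'sum s, hkk c]
      exact Finset.sum_le_sum (fun j _ => hub j)
    have hlsum : ∑ j, leftLimit (K j) c ≤ s := by
      rw [← ht'sum s]
      exact Finset.sum_le_sum (fun j _ => hlb j)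
    have hceq : c = ll s := by
      by_contra hne
      rcases lt_or_gt_of_ne hne with h | h
      · obtain ⟨w, hw1, hw2⟩ := exists_between h
        have h1 : kk w ≤ s := hP2 s w hw2
        have h2 : kk c < kk w := hkkstrict hw1
        exact absurd (lt_of_le_of_lt hsub h2) (not_lt.2 h1)
      · obtain ⟨w, hw1, hw2⟩ := exists_between h
        have h1 : s < kk w := hP3 s w hw1
        have h2 : kk w ≤ ∑ j, leftLimit (K j) c := by
          rw [hkk w]
          exact Finset.sum_le_sum (fun j _ =>
            le_csSup ((hKmono j).map_bddAbove bddAbove_Iio) ⟨w, hw2, rfl⟩)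
        exact absurd (h1.trans_le (h2.trans hlsum)) (lt_irrefl s)
    rw [hceq] at hub hlb
    have hnj : ∀ j, ¬ 0 < jumpAt (K j) (ll s) → t' j s = t j s := by
      intro j hj
      have hz : jumpAt (K j) (ll s) = 0 := nonpos_iff_eq_zero.1 (not_lt.1 hj)
      have hv := hnojump_val j (ll s) hz
      rw [htneg j s hj]
      refine le_antisymm (hub j) ?_
      rw [← hv]
      exact hlb j
    by_cases hj : 0 < jumpAt (K i) (ll s)
    · have hothers : ∀ j ∈ Finset.univ.erase i, t' j s = t j s := fun j hjm =>
        hnj j (fun hc => hone j i _ (Finset.ne_of_mem_erase hjm) hc hj)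
      have e1 := Finset.add_sum_erase Finset.univ (fun j => t' j s) (Finset.mem_univ i)
      rw [ht'sum s] at e1
      have e2 := Finset.add_sum_erase Finset.univ (fun j => t j s) (Finset.mem_univ i)
      rw [htsum s] at e2
      rw [Finset.sum_congr rfl hothers] at e1
      exact add_right_cancel (e1.trans e2.symm)
    · exact hnj i hj
  refine ⟨t, ⟨htmono, htsum, fun i j s => by rw [htlevel i s, htlevel j s]⟩, huniq, htlevel, ?_⟩
  intro i s
  simp only [hKfold]
  by_cases hj : 0 < jumpAt (K i) (ll s)
  · have hd1 : kk (ll s) - s ≤ K i (ll s) :=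
      le_trans (hd i s hj) (by simp only [jumpAt]; exact tsub_le_self)
    have hsle : s ≤ kk (ll s) := hP4 s
    rw [htpos i s hj, if_pos hj, NNReal.coe_sub hd1, NNReal.coe_sub hsle]
    ring
  · rw [htneg i s hj, if_neg hj]
    ring
end

section
/- Let (Ω, F, P) be a probability space and, for each ε ∈ [0,1], let (K_ε(s))_{s ≥ 0} be a family of random variables on Ω such that: (a) for every ω ∈ Ω and every ε, the path s ↦ K_ε(s)(ω) is continuous and nondecreasing with K_ε(0)(ω) = 0; (b) there is a function χ : [0,∞) → [0,∞) such that E[K_ε(s)²] ≤ χ(s) for all s ≥ 0 and all ε ∈ (0,1], and ∫₀^∞ e^{−λs} √(χ(s)) ds < ∞ for every λ > 0; (c) for every s ≥ 0, K_ε(s) converges to K₀(s) in probability as ε → 0. Then for every λ > 0, lim_{ε→0} E[∫₀^∞ e^{−λs} dK_ε(s)] = E[∫₀^∞ e^{−λs} dK₀(s)], where ∫₀^∞ e^{−λs} dK(s) denotes the pathwise Lebesgue–Stieltjes integral of s ↦ e^{−λs} with respect to the continuous nondecreasing path s ↦ K(s) (a value in [0,∞]). -/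
open MeasureTheory Filter Set Topology
open scoped ENNReal

open Classical in
/-- The Stieltjes function associated with `F`, when `F` is monotone and continuous
(junk value otherwise). -/
noncomputable def stieltjesOfFun (F : ℝ → ℝ) : StieltjesFunction ℝ :=
  if h : Monotone F ∧ Continuous F then
    { toFun := F
      mono' := h.1
      right_continuous' := fun _ => h.2.continuousAt.continuousWithinAt }
  else StieltjesFunction.id

/-- The pathwise Lebesgue–Stieltjes integral `∫₀^∞ e^{-λ s} dF(s)`, a value in `[0,∞]`. -/
noncomputable def expStieltjesIntegral (lam : ℝ) (F : ℝ → ℝ) : ℝ≥0∞ :=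
  ∫⁻ s in Set.Ici (0:ℝ), ENNReal.ofReal (Real.exp (-lam * s)) ∂(stieltjesOfFun F).measure

lemma aux_exp_eq (lam : ℝ) (hlam : 0 < lam) (s : ℝ) :
    ENNReal.ofReal (Real.exp (-lam * s))
      = ∫⁻ t in Ioi s, ENNReal.ofReal (lam * Real.exp (-lam * t)) := by
  have hint : IntegrableOn (fun t => lam * Real.exp (-lam * t)) (Ioi s) := by
    exact (exp_neg_integrableOn_Ioi s hlam).const_mul lam
  rw [← ofReal_integral_eq_lintegral_ofReal hint]
  · have hderiv : ∀ x ∈ Ici s, HasDerivAt (fun t => -Real.exp (-lam * t))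
        (lam * Real.exp (-lam * x)) x := by
      intro x _
      have h1 : HasDerivAt (fun t : ℝ => -lam * t) (-lam) x := by
        simpa using (hasDerivAt_id x).const_mul (-lam)
      have h3 := h1.exp.neg
      have : -(Real.exp (-lam * x) * -lam) = lam * Real.exp (-lam * x) := by ring
      rwa [this] at h3
    have htend : Tendsto (fun t => -Real.exp (-lam * t)) atTop (𝓝 0) := by
      have h1 : Tendsto (fun t : ℝ => lam * t) atTop atTop :=
        tendsto_id.const_mul_atTop hlam
      have h2 : Tendsto (fun t : ℝ => -lam * t) atTop atBot := by
        rw [show (fun t : ℝ => -lam * t) = (fun y : ℝ => -y) ∘ (fun t : ℝ => lam * t) from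
          funext fun t => by simp [Function.comp, neg_mul]]
        exact tendsto_neg_atTop_atBot.comp h1
      have h0 : Tendsto (fun t : ℝ => Real.exp (-lam * t)) atTop (𝓝 0) :=
        Real.tendsto_exp_atBot.comp h2
      simpa using h0.neg
    rw [integral_Ioi_of_hasDerivAt_of_tendsto' hderiv hint htend]
    norm_num
  · filter_upwards with x
    positivity

lemma stieltjesOfFun_apply {F : ℝ → ℝ} (hm : Monotone F) (hc : Continuous F) :
    ⇑(stieltjesOfFun F) = F := by
  rw [stieltjesOfFun, dif_pos ⟨hm, hc⟩]

lemma aux_stieltjes_eq (lam : ℝ) (hlam : 0 < lam) (F : ℝ → ℝ)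
    (hm : Monotone F) (hc : Continuous F) (h0 : ∀ s ≤ (0:ℝ), F s = 0) :
    expStieltjesIntegral lam F
      = ∫⁻ t in Ioi (0:ℝ), ENNReal.ofReal (lam * Real.exp (-lam * t) * F t) := by
  set μ := (stieltjesOfFun F).measure with hμ
  have hco : ⇑(stieltjesOfFun F) = F := stieltjesOfFun_apply hm hc
  have hleft : ∀ x : ℝ, Function.leftLim F x = F x := fun x =>
    leftLim_eq_of_tendsto (h := (inferInstance : (𝓝[<] x).NeBot))
      ((hc.tendsto x).mono_left nhdsWithin_le_nhds)
  have hIco : ∀ t : ℝ, μ (Ico 0 t) = ENNReal.ofReal (F t) := by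
    intro t
    rw [hμ, StieltjesFunction.measure_Ico, hco, hleft, hleft, h0 0 le_rfl, sub_zero]
  have step1 : expStieltjesIntegral lam F
      = ∫⁻ s in Ici (0:ℝ), ∫⁻ t, (Ioi s).indicator
          (fun t => ENNReal.ofReal (lam * Real.exp (-lam * t))) t ∂volume ∂μ := by
    refine lintegral_congr fun s => ?_
    rw [aux_exp_eq lam hlam s, ← lintegral_indicator measurableSet_Ioi]
  rw [step1]
  have hmeas : Measurable (Function.uncurry fun (s t : ℝ) => (Ioi s).indicator
      (fun t => ENNReal.ofReal (lam * Real.exp (-lam * t))) t) := by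
    have : (Function.uncurry fun (s t : ℝ) => (Ioi s).indicator
        (fun t => ENNReal.ofReal (lam * Real.exp (-lam * t))) t)
        = {p : ℝ × ℝ | p.1 < p.2}.indicator
            (fun p => ENNReal.ofReal (lam * Real.exp (-lam * p.2))) := by
      funext p
      rcases p with ⟨s, t⟩
      by_cases h : s < t
      · simp [Function.uncurry, Set.indicator_of_mem, h, Set.mem_setOf_eq]
      · simp [Function.uncurry, Set.indicator_of_notMem, h, Set.mem_setOf_eq]
    rw [this]
    exact Measurable.indicator
      (ENNReal.measurable_ofReal.comp (by fun_prop))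
      (measurableSet_lt measurable_fst measurable_snd)
  rw [lintegral_lintegral_swap hmeas.aemeasurable]
  have step2 : ∀ t : ℝ, (∫⁻ s in Ici (0:ℝ), (Ioi s).indicator
      (fun t => ENNReal.ofReal (lam * Real.exp (-lam * t))) t ∂μ)
      = ENNReal.ofReal (lam * Real.exp (-lam * t)) * μ (Ico 0 t) := by
    intro t
    have : ∀ s : ℝ, (Ioi s).indicator
        (fun t => ENNReal.ofReal (lam * Real.exp (-lam * t))) t
        = (Iio t).indicator (fun _ => ENNReal.ofReal (lam * Real.exp (-lam * t))) s := by
      intro s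
      by_cases h : s < t
      · rw [Set.indicator_of_mem (by exact h), Set.indicator_of_mem (by exact h)]
      · rw [Set.indicator_of_notMem (by simpa using h),
          Set.indicator_of_notMem (by simpa using h)]
    rw [lintegral_congr this, lintegral_indicator measurableSet_Iio, setLIntegral_const,
      Measure.restrict_apply measurableSet_Iio, inter_comm, Set.Ici_inter_Iio, mul_comm]
  rw [lintegral_congr step2]
  have final : (fun t : ℝ => ENNReal.ofReal (lam * Real.exp (-lam * t)) * μ (Ico 0 t))
      = (Ioi (0:ℝ)).indicator (fun t => ENNReal.ofReal (lam * Real.exp (-lam * t) * F t)) := by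
    funext t
    rcases le_or_gt t 0 with h | h
    · rw [Set.indicator_of_notMem (by simpa using h), hIco, h0 t h]
      simp
    · rw [Set.indicator_of_mem (by exact h), hIco]
      conv_rhs => rw [ENNReal.ofReal_mul (by positivity : (0:ℝ) ≤ lam * Real.exp (-lam * t))]
  rw [final, lintegral_indicator measurableSet_Ioi]

lemma aux_CS {Ω : Type*} [MeasurableSpace Ω] (P : Measure Ω)
    {X : Ω → ℝ} (hX : Measurable X) (hXnn : ∀ ω, 0 ≤ X ω)
    {A : Set Ω} (hA : MeasurableSet A) :
    ∫⁻ ω in A, ENNReal.ofReal (X ω) ∂P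
      ≤ (∫⁻ ω, ENNReal.ofReal (X ω ^ 2) ∂P) ^ (1/2 : ℝ) * (P A) ^ (1/2 : ℝ) := by
  have hpq : Real.HolderConjugate 2 2 := Real.HolderConjugate.two_two
  have key := ENNReal.lintegral_mul_le_Lp_mul_Lq P hpq
    (f := fun ω => ENNReal.ofReal (X ω)) (g := fun ω => A.indicator (fun _ => 1) ω)
    (ENNReal.measurable_ofReal.comp hX).aemeasurable
    ((measurable_const.indicator hA).aemeasurable)
  simp only [Pi.mul_apply] at key
  have e1 : ∫⁻ ω, ENNReal.ofReal (X ω) * A.indicator (fun _ => (1:ℝ≥0∞)) ω ∂P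
      = ∫⁻ ω in A, ENNReal.ofReal (X ω) ∂P := by
    rw [← lintegral_indicator hA]
    refine lintegral_congr fun ω => ?_
    by_cases h : ω ∈ A <;> simp [h]
  have e2 : ∫⁻ ω, ENNReal.ofReal (X ω) ^ (2:ℝ) ∂P
      = ∫⁻ ω, ENNReal.ofReal (X ω ^ 2) ∂P := by
    refine lintegral_congr fun ω => ?_
    rw [show ((2:ℝ)) = ((2:ℕ):ℝ) by norm_num, ENNReal.rpow_natCast,
      ← ENNReal.ofReal_pow (hXnn ω)]
  have e3 : ∫⁻ ω, A.indicator (fun _ => (1:ℝ≥0∞)) ω ^ (2:ℝ) ∂P = P A := by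
    have h' : ∀ ω, (A.indicator (fun _ => (1:ℝ≥0∞)) ω) ^ (2:ℝ) = A.indicator (fun _ => 1) ω := by
      intro ω; by_cases h : ω ∈ A <;>
        simp [h, ENNReal.zero_rpow_of_pos (by norm_num : (0:ℝ) < 2)]
    rw [lintegral_congr h']
    simp [lintegral_indicator hA]
  rw [e1, e2, e3] at key
  exact key

lemma aux_conv {Ω : Type*} [MeasurableSpace Ω] (P : Measure Ω) [IsProbabilityMeasure P]
    {l : Filter ℝ} {u : Set ℝ} (h0 : (0:ℝ) ∈ u) (X : ℝ → Ω → ℝ)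
    (hmeas : ∀ ε ∈ u, Measurable (X ε))
    (hnn : ∀ ε ∈ u, ∀ ω, 0 ≤ X ε ω)
    (hl : ∀ᶠ ε in l, ε ∈ u)
    {C : ℝ≥0∞} (hC : C ≠ ⊤)
    (hmom : ∀ ε ∈ u, ∫⁻ ω, ENNReal.ofReal (X ε ω ^ 2) ∂P ≤ C)
    (hprob : ∀ δ : ℝ, 0 < δ → Tendsto (fun ε => P {ω | δ ≤ |X ε ω - X 0 ω|}) l (𝓝 0)) :
    Tendsto (fun ε => ∫⁻ ω, ENNReal.ofReal (X ε ω) ∂P) l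
      (𝓝 (∫⁻ ω, ENNReal.ofReal (X 0 ω) ∂P)) := by
  set S := C ^ (1/2:ℝ) with hS
  have hSfin : S ≠ ⊤ := ENNReal.rpow_ne_top_of_nonneg (by norm_num) hC
  have hCS : ∀ ε ∈ u, ∀ A : Set Ω, MeasurableSet A →
      ∫⁻ ω in A, ENNReal.ofReal (X ε ω) ∂P ≤ S * (P A) ^ (1/2:ℝ) := by
    intro ε hε A hA
    refine (aux_CS P (hmeas ε hε) (hnn ε hε) hA).trans ?_
    gcongr
    exact ENNReal.rpow_le_rpow (hmom ε hε) (by norm_num)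
  have hfin0 : (∫⁻ ω, ENNReal.ofReal (X 0 ω) ∂P) ≠ ⊤ := by
    have h := hCS 0 h0 univ MeasurableSet.univ
    rw [Measure.restrict_univ, measure_univ, ENNReal.one_rpow, mul_one] at h
    exact ne_top_of_le_ne_top hSfin h
  rw [ENNReal.tendsto_nhds hfin0]
  intro η hη
  obtain ⟨η', hη'pos, hη'le⟩ : ∃ η' : ℝ, 0 < η' ∧ ENNReal.ofReal η' ≤ η := by
    rcases eq_or_ne η ⊤ with rfl | hηne
    · exact ⟨1, one_pos, le_top⟩
    · exact ⟨η.toReal, ENNReal.toReal_pos hη.ne' hηne,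
        le_of_eq (ENNReal.ofReal_toReal hηne)⟩
  have hD : ∀ᶠ ε in l, ∫⁻ ω, ENNReal.ofReal |X ε ω - X 0 ω| ∂P ≤ ENNReal.ofReal η' := by
    set b := ENNReal.ofReal (η'/2) / (2*S+1) with hb
    have hbpos : 0 < b := ENNReal.div_pos
      (ENNReal.ofReal_pos.mpr (by positivity)).ne'
      (by exact ENNReal.add_ne_top.mpr ⟨ENNReal.mul_ne_top (by norm_num) hSfin,
        ENNReal.one_ne_top⟩)
    have hρpos : (0:ℝ≥0∞) < b*b := ENNReal.mul_pos hbpos.ne' hbpos.ne'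
    filter_upwards [hl, (hprob (η'/2) (by positivity)).eventually_lt_const hρpos]
      with ε hε hPA
    set A := {ω | η'/2 ≤ |X ε ω - X 0 ω|} with hAdef
    have hAm : MeasurableSet A :=
      measurableSet_le measurable_const (((hmeas ε hε).sub (hmeas 0 h0)).abs)
    have hPA2 : (P A) ^ (1/2:ℝ) ≤ b := by
      calc (P A)^(1/2:ℝ) ≤ (b*b)^(1/2:ℝ) := ENNReal.rpow_le_rpow hPA.le (by norm_num)
        _ = b := by
          rw [← pow_two, ← ENNReal.rpow_natCast, ← ENNReal.rpow_mul]; norm_num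
    calc ∫⁻ ω, ENNReal.ofReal |X ε ω - X 0 ω| ∂P
        = (∫⁻ ω in A, ENNReal.ofReal |X ε ω - X 0 ω| ∂P)
            + ∫⁻ ω in Aᶜ, ENNReal.ofReal |X ε ω - X 0 ω| ∂P :=
          (lintegral_add_compl _ hAm).symm
      _ ≤ (∫⁻ ω in A, (ENNReal.ofReal (X ε ω) + ENNReal.ofReal (X 0 ω)) ∂P)
            + ∫⁻ ω in Aᶜ, ENNReal.ofReal (η'/2) ∂P := by
          refine add_le_add (setLIntegral_mono' hAm fun ω _ => ?_)
            (setLIntegral_mono' hAm.compl fun ω hω => ?_)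
          · rw [← ENNReal.ofReal_add (hnn ε hε ω) (hnn 0 h0 ω)]
            refine ENNReal.ofReal_le_ofReal ?_
            have := hnn ε hε ω; have := hnn 0 h0 ω
            cases abs_cases (X ε ω - X 0 ω) <;> cases abs_cases (X ε ω) <;> linarith
          · have hω' : ¬ (η'/2 ≤ |X ε ω - X 0 ω|) := hω
            exact ENNReal.ofReal_le_ofReal (le_of_not_ge hω')
      _ ≤ (S * (P A)^(1/2:ℝ) + S * (P A)^(1/2:ℝ)) + ENNReal.ofReal (η'/2) := by
          refine add_le_add ?_ ?_
          · rw [lintegral_add_left ((hmeas ε hε).ennreal_ofReal)]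
            exact add_le_add (hCS ε hε A hAm) (hCS 0 h0 A hAm)
          · rw [setLIntegral_const]
            calc ENNReal.ofReal (η'/2) * P Aᶜ ≤ ENNReal.ofReal (η'/2) * 1 := by
                  gcongr; exact prob_le_one
              _ = ENNReal.ofReal (η'/2) := mul_one _
      _ ≤ ENNReal.ofReal (η'/2) + ENNReal.ofReal (η'/2) := by
          refine add_le_add ?_ le_rfl
          have he : S * (P A)^(1/2:ℝ) + S * (P A)^(1/2:ℝ) = (2*S) * (P A)^(1/2:ℝ) := by ring
          rw [he]
          calc (2*S) * (P A)^(1/2:ℝ) ≤ (2*S+1) * b := mul_le_mul' le_self_add hPA2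
            _ ≤ ENNReal.ofReal (η'/2) := by rw [hb]; exact ENNReal.mul_div_le
      _ = ENNReal.ofReal η' := by
          rw [← ENNReal.ofReal_add (by positivity) (by positivity)]; norm_num
  filter_upwards [hD, hl] with ε hDε hε
  have h1 : ∫⁻ ω, ENNReal.ofReal (X ε ω) ∂P
      ≤ (∫⁻ ω, ENNReal.ofReal (X 0 ω) ∂P) + ENNReal.ofReal η' := by
    calc ∫⁻ ω, ENNReal.ofReal (X ε ω) ∂P
        ≤ ∫⁻ ω, (ENNReal.ofReal (X 0 ω) + ENNReal.ofReal |X ε ω - X 0 ω|) ∂P := by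
          refine lintegral_mono fun ω => ?_
          rw [← ENNReal.ofReal_add (hnn 0 h0 ω) (abs_nonneg _)]
          refine ENNReal.ofReal_le_ofReal ?_
          have := le_abs_self (X ε ω - X 0 ω); linarith
      _ = (∫⁻ ω, ENNReal.ofReal (X 0 ω) ∂P) + ∫⁻ ω, ENNReal.ofReal |X ε ω - X 0 ω| ∂P :=
          lintegral_add_left ((hmeas 0 h0).ennreal_ofReal) _
      _ ≤ _ := add_le_add le_rfl hDε
  have h2 : ∫⁻ ω, ENNReal.ofReal (X 0 ω) ∂P
      ≤ (∫⁻ ω, ENNReal.ofReal (X ε ω) ∂P) + ENNReal.ofReal η' := by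
    calc ∫⁻ ω, ENNReal.ofReal (X 0 ω) ∂P
        ≤ ∫⁻ ω, (ENNReal.ofReal (X ε ω) + ENNReal.ofReal |X ε ω - X 0 ω|) ∂P := by
          refine lintegral_mono fun ω => ?_
          rw [← ENNReal.ofReal_add (hnn ε hε ω) (abs_nonneg _)]
          refine ENNReal.ofReal_le_ofReal ?_
          have := neg_abs_le (X ε ω - X 0 ω); linarith
      _ = (∫⁻ ω, ENNReal.ofReal (X ε ω) ∂P) + ∫⁻ ω, ENNReal.ofReal |X ε ω - X 0 ω| ∂P :=
          lintegral_add_left ((hmeas ε hε).ennreal_ofReal) _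
      _ ≤ _ := add_le_add le_rfl hDε
  constructor
  · exact tsub_le_iff_right.mpr (h2.trans (add_le_add le_rfl hη'le))
  · exact h1.trans (add_le_add le_rfl hη'le)

lemma aux_fatou {Ω : Type*} [MeasurableSpace Ω] (P : Measure Ω)
    (Y : ℕ → Ω → ℝ) (Z : Ω → ℝ) (hm : ∀ n, Measurable (Y n)) (C : ℝ≥0∞)
    (hmom : ∀ n, ∫⁻ ω, ENNReal.ofReal (Y n ω ^ 2) ∂P ≤ C)
    (htm : TendstoInMeasure P Y atTop Z) :
    ∫⁻ ω, ENNReal.ofReal (Z ω ^ 2) ∂P ≤ C := by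
  obtain ⟨ns, _, hae⟩ := htm.exists_seq_tendsto_ae
  calc ∫⁻ ω, ENNReal.ofReal (Z ω ^ 2) ∂P
      = ∫⁻ ω, liminf (fun i => ENNReal.ofReal (Y (ns i) ω ^ 2)) atTop ∂P := by
        refine lintegral_congr_ae ?_
        filter_upwards [hae] with ω hω
        have : Tendsto (fun i => ENNReal.ofReal (Y (ns i) ω ^ 2)) atTop
            (𝓝 (ENNReal.ofReal (Z ω ^ 2))) :=
          (ENNReal.continuous_ofReal.tendsto _).comp (((continuous_pow 2).tendsto _).comp hω)
        exact this.liminf_eq.symm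
    _ ≤ liminf (fun i => ∫⁻ ω, ENNReal.ofReal (Y (ns i) ω ^ 2) ∂P) atTop :=
        lintegral_liminf_le fun i => ((hm _).pow_const 2).ennreal_ofReal
    _ ≤ C := by
        refine (liminf_le_liminf (Eventually.of_forall fun i => hmom (ns i))).trans ?_
        simp [liminf_const]

lemma aux_sqrt (r : ℝ) :
    (ENNReal.ofReal r) ^ (1/2:ℝ) = ENNReal.ofReal (Real.sqrt r) := by
  rcases le_or_gt 0 r with h | h
  · rw [ENNReal.ofReal_rpow_of_nonneg h (by norm_num), Real.sqrt_eq_rpow]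
  · rw [ENNReal.ofReal_of_nonpos h.le, ENNReal.zero_rpow_of_pos (by norm_num),
      Real.sqrt_eq_zero_of_nonpos h.le, ENNReal.ofReal_zero]

/-- Convergence of Laplace transforms (λ-potentials) of continuous additive functionals:
if `K ε` have continuous nondecreasing paths starting from `0`, have second moments dominated by
`χ` with `∫₀^∞ e^{-λs} √(χ s) ds < ∞`, and `K ε s → K 0 s` in probability as `ε → 0`, then
`E ∫₀^∞ e^{-λs} dK ε (s) → E ∫₀^∞ e^{-λs} dK 0 (s)` for every `λ > 0`. -/
theorem stmt8 {Ω : Type*} [MeasurableSpace Ω] (P : Measure Ω) [IsProbabilityMeasure P]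
    (K : ℝ → ℝ → Ω → ℝ)
    (hmeas : ∀ ε ∈ Icc (0:ℝ) 1, ∀ s : ℝ, Measurable (K ε s))
    (hpath : ∀ ε ∈ Icc (0:ℝ) 1, ∀ ω : Ω,
      MonotoneOn (fun s => K ε s ω) (Ici 0) ∧
      ContinuousOn (fun s => K ε s ω) (Ici 0) ∧ K ε 0 ω = 0)
    (χ : ℝ → ℝ)
    (hχ : ∀ s : ℝ, 0 ≤ s → ∀ ε ∈ Ioc (0:ℝ) 1,
      ∫⁻ ω, ENNReal.ofReal ((K ε s ω) ^ 2) ∂P ≤ ENNReal.ofReal (χ s))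
    (hχint : ∀ lam : ℝ, 0 < lam →
      IntegrableOn (fun s => Real.exp (-lam * s) * Real.sqrt (χ s)) (Ici 0))
    (hprob : ∀ s : ℝ, 0 ≤ s → ∀ δ : ℝ, 0 < δ →
      Tendsto (fun ε => P {ω | δ ≤ |K ε s ω - K 0 s ω|}) (𝓝[Ioc (0:ℝ) 1] 0) (𝓝 0)) :
    ∀ lam : ℝ, 0 < lam →
      Tendsto (fun ε => ∫⁻ ω, expStieltjesIntegral lam (fun s => K ε (max s 0) ω) ∂P)
        (𝓝[Ioc (0:ℝ) 1] 0)
        (𝓝 (∫⁻ ω, expStieltjesIntegral lam (fun s => K 0 (max s 0) ω) ∂P)) := by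
  intro lam hlam
  have h0mem : (0:ℝ) ∈ Icc (0:ℝ) 1 := ⟨le_rfl, zero_le_one⟩
  have hsub : ∀ ε ∈ Ioc (0:ℝ) 1, ε ∈ Icc (0:ℝ) 1 := fun ε h => ⟨h.1.le, h.2⟩
  -- path facts
  have hmono : ∀ ε ∈ Icc (0:ℝ) 1, ∀ ω, Monotone (fun s => K ε (max s 0) ω) := by
    intro ε hε ω s t hst
    exact (hpath ε hε ω).1 (mem_Ici.mpr (le_max_right s 0)) (mem_Ici.mpr (le_max_right t 0))
      (max_le_max hst le_rfl)
  have hcont : ∀ ε ∈ Icc (0:ℝ) 1, ∀ ω, Continuous (fun s => K ε (max s 0) ω) :=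
    fun ε hε ω => ((hpath ε hε ω).2.1).comp_continuous
      (continuous_id.max continuous_const) (fun x => mem_Ici.mpr (le_max_right x 0))
  have hzero : ∀ ε ∈ Icc (0:ℝ) 1, ∀ ω, ∀ s ≤ (0:ℝ), K ε (max s 0) ω = 0 := by
    intro ε hε ω s hs
    rw [max_eq_right hs]
    exact (hpath ε hε ω).2.2
  have hnn : ∀ ε ∈ Icc (0:ℝ) 1, ∀ s : ℝ, 0 ≤ s → ∀ ω, 0 ≤ K ε s ω := by
    intro ε hε s hs ω
    have h1 := (hpath ε hε ω).1 (mem_Ici.mpr le_rfl) (mem_Ici.mpr hs) hs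
    have h2 := (hpath ε hε ω).2.2
    simp only at h1
    rw [h2] at h1
    exact h1
  have hjoint : ∀ ε ∈ Icc (0:ℝ) 1,
      Measurable (Function.uncurry fun (t : ℝ) (ω : Ω) => K ε (max t 0) ω) :=
    fun ε hε => measurable_uncurry_of_continuous_of_measurable
      (fun ω => hcont ε hε ω) (fun t => hmeas ε hε (max t 0))
  -- Fubini representation
  have key : ∀ ε ∈ Icc (0:ℝ) 1,
      (∫⁻ ω, expStieltjesIntegral lam (fun s => K ε (max s 0) ω) ∂P)
        = ∫⁻ t in Ioi (0:ℝ), ENNReal.ofReal (lam * Real.exp (-lam * t))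
            * (∫⁻ ω, ENNReal.ofReal (K ε (max t 0) ω) ∂P) ∂volume := by
    intro ε hε
    have step : ∀ ω, expStieltjesIntegral lam (fun s => K ε (max s 0) ω)
        = ∫⁻ t in Ioi (0:ℝ),
            ENNReal.ofReal (lam * Real.exp (-lam * t) * K ε (max t 0) ω) ∂volume :=
      fun ω => aux_stieltjes_eq lam hlam _ (hmono ε hε ω) (hcont ε hε ω)
        (fun s hs => hzero ε hε ω s hs)
    rw [lintegral_congr step]
    have hm1 : AEMeasurable (Function.uncurry fun (ω : Ω) (t : ℝ) =>
        ENNReal.ofReal (lam * Real.exp (-lam * t) * K ε (max t 0) ω))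
        (P.prod (volume.restrict (Ioi (0:ℝ)))) := by
      apply Measurable.aemeasurable
      have hK : Measurable (fun p : Ω × ℝ => K ε (max p.2 0) p.1) :=
        (hjoint ε hε).comp measurable_swap
      have hexp : Measurable (fun p : Ω × ℝ => lam * Real.exp (-lam * p.2)) := by fun_prop
      exact (hexp.mul hK).ennreal_ofReal
    rw [lintegral_lintegral_swap hm1]
    refine lintegral_congr fun t => ?_
    simp_rw [ENNReal.ofReal_mul (show (0:ℝ) ≤ lam * Real.exp (-lam * t) by positivity)]
    exact lintegral_const_mul _ ((hmeas ε hε (max t 0)).ennreal_ofReal)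
  -- second moment bound for ε = 0, by Fatou along a sequence
  have hun : ∀ n : ℕ, (1/((n:ℝ)+1)) ∈ Ioc (0:ℝ) 1 := by
    intro n
    constructor
    · positivity
    · rw [div_le_one (by positivity)]
      linarith [Nat.cast_nonneg (α := ℝ) n]
  have hχ0 : ∀ t : ℝ, 0 ≤ t →
      ∫⁻ ω, ENNReal.ofReal ((K 0 t ω)^2) ∂P ≤ ENNReal.ofReal (χ t) := by
    intro t ht
    have hu : Tendsto (fun n : ℕ => 1/((n:ℝ)+1)) atTop (𝓝[Ioc (0:ℝ) 1] 0) :=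
      tendsto_nhdsWithin_of_tendsto_nhds_of_eventually_within _
        tendsto_one_div_add_atTop_nhds_zero_nat (Eventually.of_forall hun)
    refine aux_fatou P (fun n => K (1/((n:ℝ)+1)) t) (K 0 t)
      (fun n => hmeas _ (hsub _ (hun n)) t) (ENNReal.ofReal (χ t))
      (fun n => hχ t ht _ (hun n)) ?_
    rw [tendstoInMeasure_iff_dist]
    intro δ hδ
    have := (hprob t ht δ hδ).comp hu
    simpa [Real.dist_eq, Function.comp_def] using this
  -- the set of relevant parameters
  set u : Set ℝ := insert (0:ℝ) (Ioc (0:ℝ) 1) with hu_def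
  have huIcc : ∀ ε ∈ u, ε ∈ Icc (0:ℝ) 1 := by
    intro ε hε
    rcases hε with rfl | hε
    · exact h0mem
    · exact hsub ε hε
  -- dominated convergence
  rw [key 0 h0mem]
  have main := tendsto_lintegral_filter_of_dominated_convergence
    (μ := volume.restrict (Ioi (0:ℝ))) (l := 𝓝[Ioc (0:ℝ) 1] (0:ℝ))
    (F := fun ε t => ENNReal.ofReal (lam * Real.exp (-lam * t))
      * (∫⁻ ω, ENNReal.ofReal (K ε (max t 0) ω) ∂P))
    (f := fun t => ENNReal.ofReal (lam * Real.exp (-lam * t))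
      * (∫⁻ ω, ENNReal.ofReal (K 0 (max t 0) ω) ∂P))
    (fun t => ENNReal.ofReal (lam * Real.exp (-lam * t))
      * ENNReal.ofReal (Real.sqrt (χ t)))
    ?_ ?_ ?_ ?_
  · refine Tendsto.congr' ?_ main
    filter_upwards [self_mem_nhdsWithin] with ε hε
    exact (key ε (hsub ε hε)).symm
  · -- measurability
    filter_upwards [self_mem_nhdsWithin] with ε hε
    have hK : Measurable (fun p : ℝ × Ω => ENNReal.ofReal (K ε (max p.1 0) p.2)) :=
      (hjoint ε (hsub ε hε)).ennreal_ofReal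
    exact ((by fun_prop : Measurable fun t : ℝ =>
      ENNReal.ofReal (lam * Real.exp (-lam * t)))).mul hK.lintegral_prod_right'
  · -- domination
    filter_upwards [self_mem_nhdsWithin] with ε hε
    filter_upwards [ae_restrict_mem measurableSet_Ioi] with t ht
    have hmax : max t 0 = t := max_eq_left (le_of_lt ht)
    rw [hmax]
    gcongr
    have hcs := aux_CS P (hmeas ε (hsub ε hε) t) (hnn ε (hsub ε hε) t (le_of_lt ht))
      MeasurableSet.univ
    rw [Measure.restrict_univ, measure_univ, ENNReal.one_rpow, mul_one] at hcs
    refine hcs.trans ?_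
    rw [← aux_sqrt]
    exact ENNReal.rpow_le_rpow (hχ t (le_of_lt ht) ε hε) (by norm_num)
  · -- finiteness of the bound
    have hint := (hχint lam hlam).mono_set Ioi_subset_Ici_self
    have hfin := hint.hasFiniteIntegral
    rw [hasFiniteIntegral_iff_ofReal (Eventually.of_forall fun t => by positivity)] at hfin
    have : ∀ t : ℝ, ENNReal.ofReal (lam * Real.exp (-lam * t))
        * ENNReal.ofReal (Real.sqrt (χ t))
        = ENNReal.ofReal lam * ENNReal.ofReal (Real.exp (-lam * t) * Real.sqrt (χ t)) := by
      intro t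
      rw [ENNReal.ofReal_mul hlam.le, mul_assoc,
        ← ENNReal.ofReal_mul (Real.exp_nonneg _)]
    rw [lintegral_congr this, lintegral_const_mul' _ _ ENNReal.ofReal_ne_top]
    exact ENNReal.mul_ne_top ENNReal.ofReal_ne_top hfin.ne
  · -- pointwise convergence
    filter_upwards [ae_restrict_mem measurableSet_Ioi] with t ht
    have hmax : max t 0 = t := max_eq_left (le_of_lt ht)
    refine ENNReal.Tendsto.const_mul ?_ (Or.inr ENNReal.ofReal_ne_top)
    refine aux_conv P (C := ENNReal.ofReal (χ t)) (mem_insert 0 _) (fun ε => K ε (max t 0))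
      (fun ε hε => hmeas ε (huIcc ε hε) (max t 0))
      (fun ε hε ω => hnn ε (huIcc ε hε) (max t 0) (le_max_right t 0) ω)
      (by filter_upwards [self_mem_nhdsWithin] with ε hε using mem_insert_of_mem _ hε)
      ENNReal.ofReal_ne_top ?_ ?_
    · intro ε hε
      rcases hε with rfl | hε
      · rw [hmax]; exact hχ0 t (le_of_lt ht)
      · rw [hmax]; exact hχ t (le_of_lt ht) ε hε
    · intro δ hδ
      rw [hmax]
      exact hprob t (le_of_lt ht) δ hδ
end

section
/- For every λ > 0 there is a constant κ_λ ≥ 0 such that for every Lebesgue-integrable function g : [0,∞) → ℝ and every x ≥ 0, | (1/√(2λ)) ∫₀^∞ (e^{−√(2λ)|x−y|} − e^{−√(2λ)(x+y)}) g(y) dy | ≤ κ_λ · min(x, 1) · ∫₀^∞ |g(y)| dy. (One may take κ_λ to be the larger of 1/√(2λ) and 2·√(2/λ)·sup_{0 < y ≤ 1} sinh(√(2λ) y)/y.) -/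
open MeasureTheory Set

/-- Bound for the resolvent kernel of the minimal (killed at `0`) Brownian motion on `[0,∞)`:
for every `λ > 0` there is `κ_λ ≥ 0` such that for every integrable `g` and every `x ≥ 0`,
`|(1/√(2λ)) ∫₀^∞ (e^{-√(2λ)|x-y|} - e^{-√(2λ)(x+y)}) g(y) dy| ≤ κ_λ · min(x,1) · ∫₀^∞ |g|`. -/
theorem stmt9 (lam : ℝ) (hlam : 0 < lam) :
    ∃ κ : ℝ, 0 ≤ κ ∧
      ∀ g : ℝ → ℝ, IntegrableOn g (Ici 0) → ∀ x : ℝ, 0 ≤ x →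
        |(1 / Real.sqrt (2 * lam)) *
            ∫ y in Ici (0:ℝ),
              (Real.exp (-(Real.sqrt (2 * lam)) * |x - y|) -
                Real.exp (-(Real.sqrt (2 * lam)) * (x + y))) * g y|
          ≤ κ * min x 1 * ∫ y in Ici (0:ℝ), |g y| := by
  set a := Real.sqrt (2 * lam) with ha_def
  have ha : 0 < a := Real.sqrt_pos.mpr (by linarith)
  refine ⟨(1 / a) * max (2 * a) 1, by positivity, ?_⟩
  intro g hg x hx
  have hmin0 : 0 ≤ min x 1 := le_min hx zero_le_one
  set C : ℝ := max (2 * a) 1 * min x 1 with hC_def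
  have hC0 : 0 ≤ C := mul_nonneg (le_trans zero_le_one (le_max_right _ _)) hmin0
  -- pointwise bound on the kernel
  have key : ∀ y : ℝ, 0 ≤ y →
      |Real.exp (-a * |x - y|) - Real.exp (-a * (x + y))| ≤ C := by
    intro y hy0
    have habs1 : |x - y| ≤ x + y := by
      rw [abs_sub_le_iff]; constructor <;> linarith
    have habs0 : 0 ≤ |x - y| := abs_nonneg _
    have habs2 : y - x ≤ |x - y| := by
      rw [abs_sub_comm]; exact le_abs_self _
    have hle : Real.exp (-a * (x + y)) ≤ Real.exp (-a * |x - y|) :=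
      Real.exp_le_exp.mpr (by nlinarith)
    rw [abs_of_nonneg (by linarith)]
    have hexp1 : Real.exp (-a * |x - y|) ≤ 1 :=
      Real.exp_le_one_iff.mpr (by nlinarith)
    have hexp0 : 0 < Real.exp (-a * (x + y)) := Real.exp_pos _
    have hexpu0 : 0 < Real.exp (-a * |x - y|) := Real.exp_pos _
    -- Lipschitz bound: exp(-u) - exp(-v) ≤ v - u
    have hlip : Real.exp (-a * |x - y|) - Real.exp (-a * (x + y)) ≤
        a * (x + y) - a * |x - y| := by
      have hfac : Real.exp (-a * (x + y)) =
          Real.exp (-a * |x - y|) * Real.exp (-(a * (x + y) - a * |x - y|)) := by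
        rw [← Real.exp_add]; ring_nf
      have htay : 1 - (a * (x + y) - a * |x - y|) ≤
          Real.exp (-(a * (x + y) - a * |x - y|)) := by
        linarith [Real.add_one_le_exp (-(a * (x + y) - a * |x - y|))]
      nlinarith
    have hvu : a * (x + y) - a * |x - y| ≤ 2 * a * x := by nlinarith
    rcases le_or_gt x 1 with hx1 | hx1
    · have : min x 1 = x := min_eq_left hx1
      calc Real.exp (-a * |x - y|) - Real.exp (-a * (x + y)) ≤ 2 * a * x := by linarith
        _ = (2 * a) * min x 1 := by rw [this]
        _ ≤ C := by
            apply mul_le_mul_of_nonneg_right (le_max_left _ _) hmin0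
    · have : min x 1 = 1 := min_eq_right hx1.le
      calc Real.exp (-a * |x - y|) - Real.exp (-a * (x + y)) ≤ 1 := by linarith
        _ = 1 * min x 1 := by rw [this]; ring
        _ ≤ C := mul_le_mul_of_nonneg_right (le_max_right _ _) hmin0
  -- integrability of the integrand
  have hK1 : ∀ y : ℝ, 0 ≤ y →
      |Real.exp (-a * |x - y|) - Real.exp (-a * (x + y))| ≤ 1 := by
    intro y hy0
    have habs1 : |x - y| ≤ x + y := by
      rw [abs_sub_le_iff]; constructor <;> linarith
    have hle : Real.exp (-a * (x + y)) ≤ Real.exp (-a * |x - y|) :=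
      Real.exp_le_exp.mpr (by nlinarith)
    have hexp1 : Real.exp (-a * |x - y|) ≤ 1 :=
      Real.exp_le_one_iff.mpr (by nlinarith [abs_nonneg (x - y)])
    have hexp0 : 0 < Real.exp (-a * (x + y)) := Real.exp_pos _
    rw [abs_of_nonneg (by linarith)]; linarith
  have hmeas : AEStronglyMeasurable
      (fun y => (Real.exp (-a * |x - y|) - Real.exp (-a * (x + y))) * g y)
      (volume.restrict (Ici (0:ℝ))) := by
    apply AEStronglyMeasurable.mul _ hg.aestronglyMeasurable
    exact (Continuous.sub
      (Real.continuous_exp.comp (by continuity))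
      (Real.continuous_exp.comp (by continuity))).aestronglyMeasurable
  have hint : IntegrableOn
      (fun y => (Real.exp (-a * |x - y|) - Real.exp (-a * (x + y))) * g y)
      (Ici (0:ℝ)) := by
    apply Integrable.mono hg hmeas
    filter_upwards [ae_restrict_mem measurableSet_Ici] with y hy
    rw [Real.norm_eq_abs, Real.norm_eq_abs, abs_mul]
    calc |Real.exp (-a * |x - y|) - Real.exp (-a * (x + y))| * |g y|
        ≤ 1 * |g y| := mul_le_mul_of_nonneg_right (hK1 y hy) (abs_nonneg _)
      _ = |g y| := one_mul _
  have habsg : IntegrableOn (fun y => |g y|) (Ici (0:ℝ)) := hg.abs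
  -- main estimate
  have step1 : |∫ y in Ici (0:ℝ),
      (Real.exp (-a * |x - y|) - Real.exp (-a * (x + y))) * g y|
      ≤ ∫ y in Ici (0:ℝ),
        |(Real.exp (-a * |x - y|) - Real.exp (-a * (x + y))) * g y| := by
    have := norm_integral_le_integral_norm (μ := volume.restrict (Ici (0:ℝ)))
      (f := fun y => (Real.exp (-a * |x - y|) - Real.exp (-a * (x + y))) * g y)
    simpa only [Real.norm_eq_abs] using this
  have step2 : (∫ y in Ici (0:ℝ),
      |(Real.exp (-a * |x - y|) - Real.exp (-a * (x + y))) * g y|)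
      ≤ ∫ y in Ici (0:ℝ), C * |g y| := by
    apply setIntegral_mono_on hint.abs (habsg.const_mul C) measurableSet_Ici
    intro y hy
    rw [abs_mul]
    exact mul_le_mul_of_nonneg_right (key y hy) (abs_nonneg _)
  have step3 : (∫ y in Ici (0:ℝ), C * |g y|) = C * ∫ y in Ici (0:ℝ), |g y| :=
    integral_const_mul C fun y => |g y|
  have hintg_nonneg : 0 ≤ ∫ y in Ici (0:ℝ), |g y| :=
    integral_nonneg fun y => abs_nonneg _
  rw [abs_mul, abs_of_nonneg (by positivity : (0:ℝ) ≤ 1 / a)]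
  calc (1 / a) * |∫ y in Ici (0:ℝ),
        (Real.exp (-a * |x - y|) - Real.exp (-a * (x + y))) * g y|
      ≤ (1 / a) * (C * ∫ y in Ici (0:ℝ), |g y|) := by
        apply mul_le_mul_of_nonneg_left _ (by positivity)
        rw [← step3]; exact le_trans step1 step2
    _ = (1 / a) * max (2 * a) 1 * min x 1 * ∫ y in Ici (0:ℝ), |g y| := by
        rw [hC_def]; ring
end

section
/- Fix an integer k ≥ 2, a real λ > 0, constants α ≥ 0, γ ≥ 0 and β_1, …, β_k ≥ 0 with α + β_1 + ⋯ + β_k > 0. Let g_1, …, g_k : [0,∞) → ℝ be bounded continuous functions with a common value g(𝔬) := g_1(0) = ⋯ = g_k(0). Define C_i := (1/√(2λ)) ∫₀^∞ e^{−√(2λ) y} g_i(y) dy, E := (2√(2λ) Σ_{i=1}^k β_i C_i + α g(𝔬)) / (λα + √(2λ) Σ_{i=1}^k β_i + γ), D_i := E − C_i, and f_i(x) := C_i e^{√(2λ) x} + D_i e^{−√(2λ) x} − √(2/λ) ∫₀^x sinh(√(2λ)(x−y)) g_i(y) dy for x ≥ 0. Then: (1) each f_i is bounded and twice continuously differentiable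 on [0,∞) (with one-sided derivatives at 0); (2) f_i(0) = E for every i and f_i''(0) = 2λE − 2g(𝔬) for every i; (3) λ f_i(x) − (1/2) f_i''(x) = g_i(x) for every i and every x ≥ 0; (4) the Feller–Wentzell boundary condition with zero jump measure holds: (α/2)·(2λE − 2g(𝔬)) − Σ_{i=1}^k β_i f_i'(0) + γ·E = 0. -/
open MeasureTheory Set

lemma star_edge (lam : ℝ) (hlam : 0 < lam) (g : ℝ → ℝ)
    (hgc : ContinuousOn g (Ici 0)) (M : ℝ) (hgb : ∀ x : ℝ, 0 ≤ x → |g x| ≤ M)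
    (Ci Di : ℝ)
    (hCi : Ci = (1 / Real.sqrt (2 * lam)) *
      ∫ y in Ici (0:ℝ), Real.exp (-(Real.sqrt (2 * lam)) * y) * g y)
    (f : ℝ → ℝ)
    (hf : ∀ x, f x = Ci * Real.exp (Real.sqrt (2 * lam) * x) +
        Di * Real.exp (-(Real.sqrt (2 * lam)) * x) -
        Real.sqrt (2 / lam) * ∫ y in (0:ℝ)..x, Real.sinh (Real.sqrt (2 * lam) * (x - y)) * g y) :
    (∃ Mf : ℝ, ∀ x : ℝ, 0 ≤ x → |f x| ≤ Mf) ∧ ContDiffOn ℝ 2 f (Ici 0) ∧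
    f 0 = Ci + Di ∧
    derivWithin f (Ici 0) 0 = Real.sqrt (2 * lam) * (Ci - Di) ∧
    ∀ x : ℝ, 0 ≤ x → iteratedDerivWithin 2 f (Ici 0) x = 2 * lam * f x - 2 * g x := by
  have h2l : (0:ℝ) < 2 * lam := by linarith
  set s : ℝ := Real.sqrt (2 * lam) with hs
  have hs0 : 0 < s := Real.sqrt_pos.2 h2l
  have hss : s ^ 2 = 2 * lam := Real.sq_sqrt h2l.le
  have h4 : Real.sqrt 4 = 2 := by
    rw [show (4:ℝ) = 2 ^ 2 by norm_num]; exact Real.sqrt_sq (by norm_num)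
  have h2s : Real.sqrt (2 / lam) = 2 / s := by
    rw [show (2:ℝ) / lam = 4 / (2 * lam) by field_simp; ring, Real.sqrt_div (by norm_num) _, h4, hs]
  -- continuous extension of g
  have hmax : ∀ x : ℝ, max x 0 ∈ Ici (0:ℝ) := fun x => mem_Ici.2 (le_max_right _ _)
  set G : ℝ → ℝ := fun y => g (max y 0) with hG
  have hGc : Continuous G := hgc.comp_continuous (continuous_id.max continuous_const) hmax
  have hGg : ∀ x : ℝ, 0 ≤ x → G x = g x := fun x hx => by simp [hG, max_eq_left hx]
  have hM0 : 0 ≤ M := le_trans (abs_nonneg _) (hgb 0 le_rfl)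
  have hGb : ∀ x, |G x| ≤ M := fun x => hgb _ (hmax x)
  -- antiderivatives
  set P : ℝ → ℝ := fun x => ∫ t in (0:ℝ)..x, Real.cosh (s * t) * G t with hP
  set Q : ℝ → ℝ := fun x => ∫ t in (0:ℝ)..x, Real.sinh (s * t) * G t with hQ
  have hPic : Continuous fun t => Real.cosh (s * t) * G t :=
    (Real.continuous_cosh.comp (continuous_const.mul continuous_id)).mul hGc
  have hQic : Continuous fun t => Real.sinh (s * t) * G t :=
    (Real.continuous_sinh.comp (continuous_const.mul continuous_id)).mul hGc
  have hPd : ∀ x : ℝ, HasDerivAt P (Real.cosh (s * x) * G x) x := fun x =>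
    (hPic.integral_hasStrictDerivAt 0 x).hasDerivAt
  have hQd : ∀ x : ℝ, HasDerivAt Q (Real.sinh (s * x) * G x) x := fun x =>
    (hQic.integral_hasStrictDerivAt 0 x).hasDerivAt
  -- the smooth representative and its derivatives
  set F : ℝ → ℝ := fun x => Ci * Real.exp (s * x) + Di * Real.exp (-(s * x)) -
      (2 / s) * (Real.sinh (s * x) * P x - Real.cosh (s * x) * Q x) with hF
  set F1 : ℝ → ℝ := fun x => s * Ci * Real.exp (s * x) - s * Di * Real.exp (-(s * x)) -
      2 * (Real.cosh (s * x) * P x - Real.sinh (s * x) * Q x) with hF1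
  set F2 : ℝ → ℝ := fun x => 2 * lam * F x - 2 * G x with hF2
  have hlin : ∀ x : ℝ, HasDerivAt (fun x : ℝ => s * x) s x := fun x => by
    simpa using (hasDerivAt_id x).const_mul s
  have hFd : ∀ x : ℝ, HasDerivAt F (F1 x) x := by
    intro x
    have h1 := ((hlin x).exp.const_mul Ci).add (((hlin x).neg.exp).const_mul Di)
    have h2 := (((hlin x).sinh.mul (hPd x)).sub ((hlin x).cosh.mul (hQd x))).const_mul (2 / s)
    have := h1.sub h2
    refine this.congr_deriv ?_
    simp only [hF1, Pi.neg_apply]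
    field_simp
    ring
  have hF1d : ∀ x : ℝ, HasDerivAt F1 (F2 x) x := by
    intro x
    have h1 := ((hlin x).exp.const_mul (s * Ci)).sub (((hlin x).neg.exp).const_mul (s * Di))
    have h2 := (((hlin x).cosh.mul (hPd x)).sub ((hlin x).sinh.mul (hQd x))).const_mul (2 : ℝ)
    have := h1.sub h2
    refine this.congr_deriv ?_
    have hid := Real.cosh_sq_sub_sinh_sq (s * x)
    simp only [hF2, hF]
    have hrw : 2 * lam = s ^ 2 := hss.symm
    rw [hrw]
    field_simp
    linear_combination (-2 * G x) * hid
  have hFderiv : deriv F = F1 := funext fun x => (hFd x).deriv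
  have hF1deriv : deriv F1 = F2 := funext fun x => (hF1d x).deriv
  have hFcont : Continuous F := continuous_iff_continuousAt.2 fun x => (hFd x).continuousAt
  have hF2cont : Continuous F2 := ((continuous_const.mul hFcont)).sub (continuous_const.mul hGc)
  have hFC2 : ContDiff ℝ 2 F := by
    rw [show (2 : WithTop ℕ∞) = 1 + 1 from by norm_num, contDiff_succ_iff_deriv]
    refine ⟨fun x => (hFd x).differentiableAt, by simp, ?_⟩
    rw [hFderiv, contDiff_one_iff_deriv]
    exact ⟨fun x => (hF1d x).differentiableAt, hF1deriv ▸ hF2cont⟩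
  -- f agrees with F on [0, ∞)
  have heq : EqOn f F (Ici 0) := by
    intro x hx
    have hx0 : (0:ℝ) ≤ x := hx
    have hint : ∫ y in (0:ℝ)..x, Real.sinh (s * (x - y)) * g y =
        Real.sinh (s * x) * P x - Real.cosh (s * x) * Q x := by
      have h1 : ∫ y in (0:ℝ)..x, Real.sinh (s * (x - y)) * g y =
          ∫ y in (0:ℝ)..x, (Real.sinh (s * x) * (Real.cosh (s * y) * G y) -
            Real.cosh (s * x) * (Real.sinh (s * y) * G y)) := by
        apply intervalIntegral.integral_congr
        intro y hy
        rw [uIcc_of_le hx0] at hy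
        simp only
        rw [← hGg y hy.1, mul_sub, Real.sinh_sub]
        ring
      rw [h1, intervalIntegral.integral_sub
          ((hPic.intervalIntegrable 0 x).const_mul _)
          ((hQic.intervalIntegrable 0 x).const_mul _),
        intervalIntegral.integral_const_mul, intervalIntegral.integral_const_mul]
    rw [hf x, hint, h2s, hF]
    ring_nf
  have hu : UniqueDiffOn ℝ (Ici (0:ℝ)) := uniqueDiffOn_Ici 0
  -- derivWithin of f equals F1 on [0,∞)
  have hdw : ∀ x ∈ Ici (0:ℝ), derivWithin f (Ici 0) x = F1 x := by
    intro x hx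
    rw [derivWithin_congr heq (heq hx)]
    exact ((hFd x).hasDerivWithinAt).derivWithin (hu x hx)
  have hdw2 : ∀ x ∈ Ici (0:ℝ), iteratedDerivWithin 2 f (Ici 0) x = F2 x := by
    intro x hx
    rw [iteratedDerivWithin_succ]
    have : EqOn (iteratedDerivWithin 1 f (Ici 0)) F1 (Ici 0) := by
      intro y hy
      rw [iteratedDerivWithin_one]
      exact hdw y hy
    rw [derivWithin_congr this (this hx)]
    exact ((hF1d x).hasDerivWithinAt).derivWithin (hu x hx)
  have hP0 : P 0 = 0 := intervalIntegral.integral_same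
  have hQ0 : Q 0 = 0 := intervalIntegral.integral_same
  -- boundedness material
  simp only [neg_mul] at hCi
  set A : ℝ → ℝ := fun x => ∫ t in (0:ℝ)..x, Real.exp (-(s * t)) * G t with hA
  set B : ℝ → ℝ := fun x => ∫ t in (0:ℝ)..x, Real.exp (s * t) * G t with hB
  have hAic : Continuous fun t => Real.exp (-(s * t)) * G t :=
    (Real.continuous_exp.comp (continuous_const.mul continuous_id).neg).mul hGc
  have hBic : Continuous fun t => Real.exp (s * t) * G t :=
    (Real.continuous_exp.comp (continuous_const.mul continuous_id)).mul hGc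
  have hrep : ∀ x : ℝ, F x =
      Real.exp (s * x) * (Ci - A x / s) + Real.exp (-(s * x)) * (Di + B x / s) := by
    intro x
    have key : Real.exp (s * x) * A x - Real.exp (-(s * x)) * B x =
        2 * (Real.sinh (s * x) * P x - Real.cosh (s * x) * Q x) := by
      have l1 : Real.exp (s * x) * A x =
          ∫ t in (0:ℝ)..x, Real.exp (s * x) * (Real.exp (-(s * t)) * G t) :=
        (intervalIntegral.integral_const_mul _ _).symm
      have l2 : Real.exp (-(s * x)) * B x =
          ∫ t in (0:ℝ)..x, Real.exp (-(s * x)) * (Real.exp (s * t) * G t) :=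
        (intervalIntegral.integral_const_mul _ _).symm
      have l3 : Real.sinh (s * x) * P x =
          ∫ t in (0:ℝ)..x, Real.sinh (s * x) * (Real.cosh (s * t) * G t) :=
        (intervalIntegral.integral_const_mul _ _).symm
      have l4 : Real.cosh (s * x) * Q x =
          ∫ t in (0:ℝ)..x, Real.cosh (s * x) * (Real.sinh (s * t) * G t) :=
        (intervalIntegral.integral_const_mul _ _).symm
      rw [l1, l2, l3, l4, ← intervalIntegral.integral_sub
          ((hAic.intervalIntegrable 0 x).const_mul _) ((hBic.intervalIntegrable 0 x).const_mul _),
        ← intervalIntegral.integral_sub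
          ((hPic.intervalIntegrable 0 x).const_mul _) ((hQic.intervalIntegrable 0 x).const_mul _),
        ← intervalIntegral.integral_const_mul]
      apply intervalIntegral.integral_congr
      intro t _
      simp only [Real.sinh_eq, Real.cosh_eq]
      ring
    simp only [hF]
    have h2 : Real.sinh (s * x) * P x - Real.cosh (s * x) * Q x =
        (Real.exp (s * x) * A x - Real.exp (-(s * x)) * B x) / 2 := by linarith
    rw [h2]
    field_simp
    ring
  have hgic : ContinuousOn (fun t => Real.exp (-(s * t)) * g t) (Ici 0) :=
    ((Real.continuous_exp.comp (continuous_const.mul continuous_id).neg).continuousOn).mul hgc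
  have hExpInt : ∀ x : ℝ, IntegrableOn (fun t : ℝ => Real.exp (-(s * t))) (Ioi x) := fun x => by
    simpa only [neg_mul] using exp_neg_integrableOn_Ioi x hs0
  have hintg : IntegrableOn (fun t => Real.exp (-(s * t)) * g t) (Ioi 0) := by
    refine Integrable.mono' ((hExpInt 0).const_mul M)
      ((hgic.mono Ioi_subset_Ici_self).aestronglyMeasurable measurableSet_Ioi) ?_
    refine (ae_restrict_iff' measurableSet_Ioi).2 (Filter.Eventually.of_forall fun t ht => ?_)
    rw [Real.norm_eq_abs, abs_mul, abs_of_pos (Real.exp_pos _)]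
    calc Real.exp (-(s * t)) * |g t| ≤ Real.exp (-(s * t)) * M := by
          exact mul_le_mul_of_nonneg_left (hgb t ht.le) (Real.exp_pos _).le
      _ = M * Real.exp (-(s * t)) := by ring
  have tail : ∀ x : ℝ, 0 ≤ x →
      Ci - A x / s = (1 / s) * ∫ t in Ioi x, Real.exp (-(s * t)) * g t := by
    intro x hx
    have hA' : A x = ∫ t in Ioc 0 x, Real.exp (-(s * t)) * g t := by
      simp only [hA]
      rw [intervalIntegral.integral_of_le hx]
      exact setIntegral_congr_fun measurableSet_Ioc fun t ht => by rw [hGg t ht.1.le]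
    have hsplit : (∫ y in Ici (0:ℝ), Real.exp (-(s * y)) * g y) =
        (∫ t in Ioc 0 x, Real.exp (-(s * t)) * g t) + ∫ t in Ioi x, Real.exp (-(s * t)) * g t := by
      rw [integral_Ici_eq_integral_Ioi, ← setIntegral_union (Ioc_disjoint_Ioi le_rfl)
        measurableSet_Ioi (hintg.mono_set Ioc_subset_Ioi_self)
        (hintg.mono_set (Ioi_subset_Ioi hx)), Ioc_union_Ioi_eq_Ioi hx]
    rw [hCi, hsplit, hA']
    field_simp
    ring
  have hJ : ∀ x : ℝ, (∫ t in Ioi x, Real.exp (-(s * t))) = Real.exp (-(s * x)) / s := by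
    intro x
    have := integral_comp_mul_left_Ioi (fun u => Real.exp (-u)) x hs0
    simp only [smul_eq_mul] at this
    rw [this, integral_exp_neg_Ioi]
    ring
  have bound1 : ∀ x : ℝ, 0 ≤ x →
      |Real.exp (s * x) * (Ci - A x / s)| ≤ M / s ^ 2 := by
    intro x hx
    have hb : |∫ t in Ioi x, Real.exp (-(s * t)) * g t| ≤ M * (Real.exp (-(s * x)) / s) := by
      rw [← hJ x, ← MeasureTheory.integral_const_mul, ← Real.norm_eq_abs]
      refine MeasureTheory.norm_integral_le_of_norm_le
        ((hExpInt x).const_mul M)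
        ((ae_restrict_iff' measurableSet_Ioi).2 (Filter.Eventually.of_forall fun t ht => ?_))
      rw [Real.norm_eq_abs, abs_mul, abs_of_pos (Real.exp_pos _)]
      calc Real.exp (-(s * t)) * |g t| ≤ Real.exp (-(s * t)) * M :=
            mul_le_mul_of_nonneg_left (hgb t (hx.trans ht.le)) (Real.exp_pos _).le
        _ = M * Real.exp (-(s * t)) := by ring
    rw [tail x hx, abs_mul, abs_mul, abs_of_pos (Real.exp_pos _),
      abs_of_pos (by positivity : (0:ℝ) < 1 / s)]
    have hexp : Real.exp (s * x) * Real.exp (-(s * x)) = 1 := by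
      rw [← Real.exp_add]; simp
    calc Real.exp (s * x) * (1 / s * |∫ t in Ioi x, Real.exp (-(s * t)) * g t|)
        ≤ Real.exp (s * x) * (1 / s * (M * (Real.exp (-(s * x)) / s))) := by
          have h1 : (0:ℝ) ≤ 1 / s := by positivity
          exact mul_le_mul_of_nonneg_left
            (mul_le_mul_of_nonneg_left hb h1) (Real.exp_pos _).le
      _ = M / s ^ 2 := by field_simp; linear_combination M * hexp
  have bound2 : ∀ x : ℝ, 0 ≤ x →
      |Real.exp (-(s * x)) * (Di + B x / s)| ≤ |Di| + M / s ^ 2 := by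
    intro x hx
    have hBb : |B x| ≤ M * ((Real.exp (s * x) - 1) / s) := by
      have h1 : |B x| ≤ ∫ t in (0:ℝ)..x, |Real.exp (s * t) * G t| := by
        simpa only [hB] using intervalIntegral.abs_integral_le_integral_abs hx
      have h2 : (∫ t in (0:ℝ)..x, |Real.exp (s * t) * G t|) ≤
          ∫ t in (0:ℝ)..x, M * Real.exp (s * t) := by
        refine intervalIntegral.integral_mono_on hx (hBic.abs.intervalIntegrable 0 x)
          ((continuous_const.mul (Real.continuous_exp.comp (continuous_const.mul
            continuous_id))).intervalIntegrable 0 x) fun t _ => ?_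
        rw [abs_mul, abs_of_pos (Real.exp_pos _)]
        calc Real.exp (s * t) * |G t| ≤ Real.exp (s * t) * M :=
              mul_le_mul_of_nonneg_left (hGb t) (Real.exp_pos _).le
          _ = M * Real.exp (s * t) := by ring
      have h3 : (∫ t in (0:ℝ)..x, M * Real.exp (s * t)) = M * ((Real.exp (s * x) - 1) / s) := by
        rw [intervalIntegral.integral_const_mul]
        congr 1
        have := intervalIntegral.integral_comp_mul_left (a := (0:ℝ)) (b := x)
          (fun u => Real.exp u) hs0.ne'
        simp only [smul_eq_mul, mul_zero] at this
        rw [this, integral_exp]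
        simp only [Real.exp_zero]
        ring
      linarith
    have hexp : Real.exp (-(s * x)) * Real.exp (s * x) = 1 := by
      rw [← Real.exp_add]; simp
    have hexple : Real.exp (-(s * x)) ≤ 1 :=
      Real.exp_le_one_iff.2 (by nlinarith)
    rw [abs_mul, abs_of_pos (Real.exp_pos _)]
    have habs : |Di + B x / s| ≤ |Di| + |B x| / s := by
      calc |Di + B x / s| ≤ |Di| + |B x / s| := abs_add_le _ _
        _ = |Di| + |B x| / s := by rw [abs_div, abs_of_pos hs0]
    calc Real.exp (-(s * x)) * |Di + B x / s|
        ≤ Real.exp (-(s * x)) * (|Di| + |B x| / s) :=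
          mul_le_mul_of_nonneg_left habs (Real.exp_pos _).le
      _ ≤ |Di| + M / s ^ 2 := by
          have h1 : Real.exp (-(s * x)) * |Di| ≤ |Di| := by
            nlinarith [abs_nonneg Di, Real.exp_pos (-(s * x)), hexple]
          have h2 : Real.exp (-(s * x)) * (|B x| / s) ≤ M / s ^ 2 := by
            have h3 : Real.exp (-(s * x)) * (|B x| / s) ≤
                Real.exp (-(s * x)) * (M * ((Real.exp (s * x) - 1) / s) / s) := by
              exact mul_le_mul_of_nonneg_left ((div_le_div_iff_of_pos_right hs0).2 hBb)
                (Real.exp_pos _).le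
            have h4 : Real.exp (-(s * x)) * (M * ((Real.exp (s * x) - 1) / s) / s) =
                M * (1 - Real.exp (-(s * x))) / s ^ 2 := by
              have : Real.exp (-(s * x)) * (Real.exp (s * x) - 1) =
                  1 - Real.exp (-(s * x)) := by rw [mul_sub, mul_one, hexp]
              field_simp
              linear_combination M * hexp
            have h5 : M * (1 - Real.exp (-(s * x))) / s ^ 2 ≤ M / s ^ 2 := by
              have hs2 : (0:ℝ) < s ^ 2 := by positivity
              have : M * (1 - Real.exp (-(s * x))) ≤ M := by
                nlinarith [Real.exp_pos (-(s * x)), hM0]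
              exact (div_le_div_iff_of_pos_right hs2).2 this
            linarith
          have hd := mul_add (Real.exp (-(s * x))) |Di| (|B x| / s)
          linarith
  refine ⟨?_, ?_, ?_, ?_, ?_⟩
  · refine ⟨M / s ^ 2 + (|Di| + M / s ^ 2), fun x hx => ?_⟩
    rw [heq hx, hrep x]
    exact le_trans (abs_add_le _ _) (add_le_add (bound1 x hx) (bound2 x hx))
  · exact (hFC2.contDiffOn).congr heq
  · rw [heq (self_mem_Ici), hF]
    simp [hP0, hQ0]
  · rw [hdw 0 self_mem_Ici, hF1]
    simp [hP0, hQ0]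
    ring
  · intro x hx
    simp only [hdw2 x hx, hF2, heq hx, hGg x hx]

/-- Explicit solution of the resolvent equation `λ f - (1/2) f'' = g` on the star graph with
`k` edges, with the Feller–Wentzell boundary condition `(α/2) f''(𝔬) - ∑ βᵢ fᵢ'(0) + γ f(𝔬) = 0`
(zero jump measure). Derivatives at `0` are one-sided (within `[0,∞)`). -/
theorem stmt11 (k : ℕ) (hk : 2 ≤ k) (lam : ℝ) (hlam : 0 < lam)
    (α γ : ℝ) (hα : 0 ≤ α) (hγ : 0 ≤ γ)
    (β : Fin k → ℝ) (hβ : ∀ i, 0 ≤ β i) (hpos : 0 < α + ∑ i, β i)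
    (g : Fin k → ℝ → ℝ)
    (hgc : ∀ i, ContinuousOn (g i) (Ici 0))
    (hgb : ∀ i, ∃ M : ℝ, ∀ x : ℝ, 0 ≤ x → |g i x| ≤ M)
    (g0 : ℝ) (hg0 : ∀ i, g i 0 = g0)
    (C : Fin k → ℝ)
    (hC : ∀ i, C i = (1 / Real.sqrt (2 * lam)) *
      ∫ y in Ici (0:ℝ), Real.exp (-(Real.sqrt (2 * lam)) * y) * g i y)
    (E : ℝ)
    (hE : E = (2 * Real.sqrt (2 * lam) * (∑ i, β i * C i) + α * g0) /
      (lam * α + Real.sqrt (2 * lam) * (∑ i, β i) + γ))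
    (D : Fin k → ℝ) (hD : ∀ i, D i = E - C i)
    (f : Fin k → ℝ → ℝ)
    (hf : ∀ i x, f i x =
      C i * Real.exp (Real.sqrt (2 * lam) * x) +
        D i * Real.exp (-(Real.sqrt (2 * lam)) * x) -
        Real.sqrt (2 / lam) * ∫ y in (0:ℝ)..x, Real.sinh (Real.sqrt (2 * lam) * (x - y)) * g i y) :
    (∀ i, (∃ M : ℝ, ∀ x : ℝ, 0 ≤ x → |f i x| ≤ M) ∧ ContDiffOn ℝ 2 (f i) (Ici 0)) ∧
    (∀ i, f i 0 = E ∧ iteratedDerivWithin 2 (f i) (Ici 0) 0 = 2 * lam * E - 2 * g0) ∧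
    (∀ i, ∀ x : ℝ, 0 ≤ x →
      lam * f i x - (1 / 2) * iteratedDerivWithin 2 (f i) (Ici 0) x = g i x) ∧
    (α / 2 * (2 * lam * E - 2 * g0) - (∑ i, β i * derivWithin (f i) (Ici 0) 0) + γ * E = 0) := by
  have h2l : (0:ℝ) < 2 * lam := by linarith
  have hs0 : 0 < Real.sqrt (2 * lam) := Real.sqrt_pos.2 h2l
  have key : ∀ i, (∃ Mf : ℝ, ∀ x : ℝ, 0 ≤ x → |f i x| ≤ Mf) ∧ ContDiffOn ℝ 2 (f i) (Ici 0) ∧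
      f i 0 = C i + D i ∧
      derivWithin (f i) (Ici 0) 0 = Real.sqrt (2 * lam) * (C i - D i) ∧
      ∀ x : ℝ, 0 ≤ x → iteratedDerivWithin 2 (f i) (Ici 0) x = 2 * lam * f i x - 2 * g i x := by
    intro i
    obtain ⟨M, hM⟩ := hgb i
    exact star_edge lam hlam (g i) (hgc i) M hM (C i) (D i) (hC i) (f i) (hf i)
  have hf0 : ∀ i, f i 0 = E := by
    intro i; rw [(key i).2.2.1, hD i]; ring
  refine ⟨fun i => ⟨(key i).1, (key i).2.1⟩, fun i => ⟨hf0 i, ?_⟩, fun i x hx => ?_, ?_⟩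
  · rw [(key i).2.2.2.2 0 le_rfl, hf0 i, hg0 i]
  · rw [(key i).2.2.2.2 x hx]; ring
  · set S : ℝ := Real.sqrt (2 * lam) with hS
    have hdenom : 0 < lam * α + S * (∑ i, β i) + γ := by
      have hsum : 0 ≤ ∑ i, β i := Finset.sum_nonneg fun i _ => hβ i
      have hS0 : 0 < S := hs0
      rcases eq_or_lt_of_le hα with h | h
      · have hb : 0 < ∑ i, β i := by
          have := hpos; rw [← h] at this; simpa using this
        nlinarith [mul_pos hS0 hb]
      · nlinarith [mul_pos hlam h, mul_nonneg hs0.le hsum]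
    have h1 : (∑ i, β i * derivWithin (f i) (Ici 0) 0) =
        ∑ i, (2 * S * (β i * C i) - S * E * β i) := by
      refine Finset.sum_congr rfl fun i _ => ?_
      rw [(key i).2.2.2.1, hD i]; ring
    rw [h1, Finset.sum_sub_distrib, ← Finset.mul_sum, ← Finset.mul_sum, hE]
    have hne : α * lam + S * (∑ i, β i) + γ ≠ 0 := by rw [mul_comm]; exact hdenom.ne'
    field_simp [hdenom.ne']
    ring
end

section
/- Fix c := √2/2, an integer k ≥ 2, and β_1, …, β_k ≥ 0 with β_1 + ⋯ + β_k = 1. Let f_1, …, f_k : [0,∞) → ℝ have a common value f(𝔬) := f_1(0) = ⋯ = f_k(0), set f̄ := Σ_{i=1}^k β_i f_i, and define h_i : ℝ → ℝ by h_i(x) := f_i(x) for x ≥ 0 and h_i(x) := −f_i(−x) + 2 f̄(−x) for x < 0. For g : [0,∞) → ℝ, t ≥ 0 and x ≥ 0 define (C_ref(t)g)(x) := (1/2)(g(x + ct) + g(|x − ct|)) and (C_min(t)g)(x) := (1/2)(g(x + ct) + sgn(x − ct)·g(|x − ct|)), with the convention sgn(0) = 0. Then for every index i, every t ≥ 0 and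 every x ≥ 0: (1/2)(h_i(x + ct) + h_i(x − ct)) = (C_min(t)(f_i − f̄))(x) + (C_ref(t) f̄)(x). -/
/-- The cosine family of Walsh's spider process: the Cartesian product basic cosine family
applied to the extension `h i` of `(f i)` equals `C_min(t)(f i - f̄) + C_ref(t) f̄`, where
`C_ref(t)g(x) = (1/2)(g(x+ct) + g(|x-ct|))`,
`C_min(t)g(x) = (1/2)(g(x+ct) + sgn(x-ct)·g(|x-ct|))` and `c = √2/2`. -/
theorem stmt14 (k : ℕ) (hk : 2 ≤ k) (β : Fin k → ℝ) (hβ : ∀ i, 0 ≤ β i)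
    (hsum : ∑ i, β i = 1)
    (f : Fin k → ℝ → ℝ) (f0 : ℝ) (hf0 : ∀ i, f i 0 = f0)
    (fbar : ℝ → ℝ) (hfbar : ∀ x, fbar x = ∑ i, β i * f i x)
    (h : Fin k → ℝ → ℝ)
    (hh : ∀ i x, h i x = if 0 ≤ x then f i x else -(f i (-x)) + 2 * fbar (-x)) :
    ∀ i, ∀ t : ℝ, 0 ≤ t → ∀ x : ℝ, 0 ≤ x →
      (1 / 2) * (h i (x + (Real.sqrt 2 / 2) * t) + h i (x - (Real.sqrt 2 / 2) * t)) =
        (1 / 2) * ((f i (x + (Real.sqrt 2 / 2) * t) - fbar (x + (Real.sqrt 2 / 2) * t)) +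
            Real.sign (x - (Real.sqrt 2 / 2) * t) *
              (f i |x - (Real.sqrt 2 / 2) * t| - fbar |x - (Real.sqrt 2 / 2) * t|)) +
          (1 / 2) * (fbar (x + (Real.sqrt 2 / 2) * t) + fbar |x - (Real.sqrt 2 / 2) * t|) := by
  have hfbar0 : fbar 0 = f0 := by
    rw [hfbar]
    calc ∑ i, β i * f i 0 = ∑ i, β i * f0 := by
          apply Finset.sum_congr rfl; intro i _; rw [hf0]
      _ = (∑ i, β i) * f0 := by rw [Finset.sum_mul]
      _ = f0 := by rw [hsum, one_mul]
  intro i t ht x hx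
  set c : ℝ := Real.sqrt 2 / 2 with hc
  have hct : 0 ≤ c * t := mul_nonneg (by positivity) ht
  have ha : 0 ≤ x + c * t := by linarith
  rw [hh i (x + c * t), if_pos ha, hh i (x - c * t)]
  rcases lt_trichotomy (x - c * t) 0 with hy | hy | hy
  · rw [if_neg (not_le.mpr hy), Real.sign_of_neg hy, abs_of_neg hy]
    ring
  · rw [hy, if_pos le_rfl, Real.sign_zero, abs_zero]
    have : f i 0 = fbar 0 := by rw [hf0, hfbar0]
    rw [this]; ring
  · rw [if_pos hy.le, Real.sign_of_pos hy, abs_of_pos hy]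
    ring
end

section
/- Fix an integer k ≥ 2, a real λ > 0, constants α ≥ 0, γ ≥ 0, β_1, …, β_k ≥ 0, and a Borel measure m on {1,…,k} × (0,∞) with ∫ min(x,1) m(d(i,x)) < ∞; assume that α + Σβ_i + γ > 0 or m is nonzero. Let g_1, …, g_k : [0,∞) → ℝ be bounded continuous with a common value g(𝔬) := g_1(0) = ⋯ = g_k(0). Define C_i := (1/√(2λ)) ∫₀^∞ e^{−√(2λ)y} g_i(y) dy, (R⁰_λ g)_i(x) := (1/√(2λ)) ∫₀^∞ (e^{−√(2λ)|x−y|} − e^{−√(2λ)(x+y)}) g_i(y) dy, and C̄ := ( ∫ (R⁰_λ g)_i(x) m(d(i,x)) + 2√(2λ) Σ_i β_i C_i + α g(𝔬) ) / ( γ + ∫ (1 − e^{−√(2λ)x}) m(d(i,x)) + λα + √(2λ) Σ_i β_i ). Then: (1) the function (i,x) ↦ (R⁰_λ g)_i(x) is m-integrable and the denominator of C̄ is finite and strictly positive; (2) the functions f_i(x) := (R⁰_λ g)_i(x) + C̄ e^{−√(2λ)x} are bounded and twice continuously differentiable on [0,∞), with f_i(0) = C̄ for all i and f_i''(0) = 2λ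 C̄ − 2 g(𝔬) for all i; (3) λ f_i(x) − (1/2) f_i''(x) = g_i(x) for all i and all x ≥ 0; (4) the function (i,x) ↦ f_i(x) − C̄ is m-integrable and the general Feller–Wentzell boundary condition holds: (α/2)·(2λ C̄ − 2g(𝔬)) − Σ_i β_i f_i'(0) + γ·C̄ = ∫ (f_i(x) − C̄) m(d(i,x)). -/
open MeasureTheory Set
open scoped ENNReal

open Real Filter
open scoped Topology

lemma aux_hde (c x : ℝ) : HasDerivAt (fun y => Real.exp (c * y)) (Real.exp (c * x) * c) x :=
  by simpa using ((hasDerivAt_id x).const_mul c).exp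

lemma aux_exp_Ioi (s a : ℝ) (hs : 0 < s) :
    ∫ y in Ioi a, Real.exp (-s * y) = Real.exp (-s * a) / s := by
  have h := integral_Ioi_of_hasDerivAt_of_tendsto'
    (f := fun y => -Real.exp (-s * y) / s) (f' := fun y => Real.exp (-s * y)) (a := a)
    (m := 0) (fun x _ => ?_) (exp_neg_integrableOn_Ioi a hs) ?_
  · rw [h]; ring
  · have := ((aux_hde (-s) x).neg.div_const s)
    refine this.congr_deriv ?_
    field_simp
  · have : Tendsto (fun y => Real.exp (-s * y)) atTop (𝓝 0) :=
      tendsto_exp_atBot.comp (tendsto_id.const_mul_atTop_of_neg (by linarith))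
    simpa using (this.neg.div_const s)

lemma aux_exp_interval (s a b : ℝ) (hs : s ≠ 0) :
    ∫ y in a..b, Real.exp (s * y) = (Real.exp (s * b) - Real.exp (s * a)) / s := by
  have h : ∀ x : ℝ, HasDerivAt (fun y => Real.exp (s * y) / s) (Real.exp (s * x)) x := by
    intro x
    have := (aux_hde s x).div_const s
    refine this.congr_deriv ?_
    field_simp
  rw [intervalIntegral.integral_eq_sub_of_hasDerivAt (fun x _ => h x)
    ((Real.continuous_exp.comp (continuous_const.mul continuous_id)).intervalIntegrable a b)]
  ring

section core
variable {s M : ℝ} {G : ℝ → ℝ}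

lemma aux_ftc (hGc : Continuous G) (c : ℝ) (x : ℝ) :
    HasDerivAt (fun t => ∫ y in (0:ℝ)..t, Real.exp (c * y) * G y) (Real.exp (c * x) * G x) x := by
  have hc : Continuous fun y => Real.exp (c * y) * G y :=
    (Real.continuous_exp.comp (continuous_const.mul continuous_id)).mul hGc
  exact intervalIntegral.integral_hasDerivAt_right (hc.intervalIntegrable _ _)
    (hc.stronglyMeasurableAtFilter _ _) hc.continuousAt

lemma aux_intOn (hs : 0 < s) (hGc : Continuous G) (hGb : ∀ y, |G y| ≤ M) (a : ℝ) :
    IntegrableOn (fun y => Real.exp (-s * y) * G y) (Ici a) := by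
  rw [integrableOn_Ici_iff_integrableOn_Ioi]
  refine Integrable.mono' ((exp_neg_integrableOn_Ioi a hs).const_mul M)
    (((Real.continuous_exp.comp (continuous_const.mul continuous_id)).mul hGc).aestronglyMeasurable)
    (Filter.Eventually.of_forall fun y => ?_)
  rw [norm_mul, Real.norm_eq_abs, Real.norm_eq_abs, Real.abs_exp]
  calc Real.exp (-s * y) * |G y| ≤ Real.exp (-s * y) * M :=
        mul_le_mul_of_nonneg_left (hGb y) (Real.exp_pos _).le
    _ = M * Real.exp (-s * y) := mul_comm _ _

end core

noncomputable def Aint (s : ℝ) (G : ℝ → ℝ) (x : ℝ) : ℝ := ∫ y in (0:ℝ)..x, Real.exp (s * y) * G y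
noncomputable def Dint (s : ℝ) (G : ℝ → ℝ) (x : ℝ) : ℝ := ∫ y in (0:ℝ)..x, Real.exp (-s * y) * G y
noncomputable def B0int (s : ℝ) (G : ℝ → ℝ) : ℝ := ∫ y in Ici (0:ℝ), Real.exp (-s * y) * G y
noncomputable def Fint (s : ℝ) (G : ℝ → ℝ) (x : ℝ) : ℝ :=
  (1 / s) * (Real.exp (-s * x) * Aint s G x + Real.exp (s * x) * (B0int s G - Dint s G x)
    - Real.exp (-s * x) * B0int s G)

section core2
variable {s M : ℝ} {G : ℝ → ℝ}

lemma aux_split (hs : 0 < s) (hGc : Continuous G) (hGb : ∀ y, |G y| ≤ M) {x : ℝ} (hx : 0 ≤ x) :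
    B0int s G - Dint s G x = ∫ y in Ici x, Real.exp (-s * y) * G y := by
  have hcont : Continuous fun y => Real.exp (-s * y) * G y :=
    (Real.continuous_exp.comp (continuous_const.mul continuous_id)).mul hGc
  have hsplit : B0int s G = (∫ y in Ico 0 x, Real.exp (-s * y) * G y)
      + ∫ y in Ici x, Real.exp (-s * y) * G y := by
    rw [B0int, ← Ico_union_Ici_eq_Ici hx]
    exact setIntegral_union ((Iio_disjoint_Ici le_rfl).mono_left Ico_subset_Iio_self) measurableSet_Ici
      ((aux_intOn hs hGc hGb 0).mono_set Ico_subset_Ici_self) (aux_intOn hs hGc hGb x)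
  have hD : Dint s G x = ∫ y in Ico 0 x, Real.exp (-s * y) * G y := by
    rw [Dint, intervalIntegral.integral_of_le hx, integral_Ioc_eq_integral_Ioo,
      ← integral_Ico_eq_integral_Ioo]
  rw [hsplit, hD]; ring

end core2

section core3
variable {s M : ℝ} {G : ℝ → ℝ}

lemma aux_cont_exp (c : ℝ) : Continuous fun y : ℝ => Real.exp (c * y) :=
  Real.continuous_exp.comp (continuous_const.mul continuous_id)

lemma aux_repr (hs : 0 < s) (hGc : Continuous G) (hGb : ∀ y, |G y| ≤ M) {x : ℝ} (hx : 0 ≤ x) :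
    (1 / s) * ∫ y in Ici (0:ℝ),
      (Real.exp (-s * |x - y|) - Real.exp (-s * (x + y))) * G y = Fint s G x := by
  have hcont : Continuous fun y => (Real.exp (-s * |x - y|) - Real.exp (-s * (x + y))) * G y := by
    fun_prop
  have hconte : Continuous fun y => Real.exp (-s * y) * G y := (aux_cont_exp (-s)).mul hGc
  have hcontes : Continuous fun y => Real.exp (s * y) * G y := (aux_cont_exp s).mul hGc
  have hIci : IntegrableOn (fun y => (Real.exp (-s * |x - y|) - Real.exp (-s * (x + y))) * G y)
      (Ici x) := by
    rw [integrableOn_Ici_iff_integrableOn_Ioi]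
    refine Integrable.mono' ((exp_neg_integrableOn_Ioi x hs).const_mul
      (2 * M * Real.exp (s * x))) hcont.aestronglyMeasurable
      (Filter.Eventually.of_forall fun y => ?_)
    have hM : 0 ≤ M := le_trans (abs_nonneg _) (hGb 0)
    have h1 : Real.exp (-s * |x - y|) ≤ Real.exp (s * x) * Real.exp (-s * y) := by
      rw [← Real.exp_add]
      apply Real.exp_le_exp.2
      have : y - x ≤ |x - y| := by rw [abs_sub_comm]; exact le_abs_self _
      nlinarith [hs.le]
    have h2 : Real.exp (-s * (x + y)) ≤ Real.exp (s * x) * Real.exp (-s * y) := by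
      rw [← Real.exp_add]
      apply Real.exp_le_exp.2
      nlinarith [hs.le, hx]
    rw [norm_mul, Real.norm_eq_abs, Real.norm_eq_abs]
    calc |Real.exp (-s * |x - y|) - Real.exp (-s * (x + y))| * |G y|
        ≤ (2 * (Real.exp (s * x) * Real.exp (-s * y))) * M := by
          apply mul_le_mul _ (hGb y) (abs_nonneg _) (by positivity)
          have := abs_sub (Real.exp (-s * |x - y|)) (Real.exp (-s * (x + y)))
          rw [Real.abs_exp, Real.abs_exp] at this
          linarith
      _ = 2 * M * Real.exp (s * x) * Real.exp (-s * y) := by ring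
  have hIco : IntegrableOn (fun y => (Real.exp (-s * |x - y|) - Real.exp (-s * (x + y))) * G y)
      (Ico 0 x) :=
    (hcont.integrableOn_Icc (a := 0) (b := x)).mono_set Ico_subset_Icc_self
  have hsplit : (∫ y in Ici (0:ℝ),
        (Real.exp (-s * |x - y|) - Real.exp (-s * (x + y))) * G y)
      = (∫ y in Ico 0 x, (Real.exp (-s * |x - y|) - Real.exp (-s * (x + y))) * G y)
      + ∫ y in Ici x, (Real.exp (-s * |x - y|) - Real.exp (-s * (x + y))) * G y := by
    rw [← Ico_union_Ici_eq_Ici hx]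
    exact setIntegral_union ((Iio_disjoint_Ici le_rfl).mono_left Ico_subset_Iio_self)
      measurableSet_Ici hIco hIci
  have hpiece1 : (∫ y in Ico 0 x, (Real.exp (-s * |x - y|) - Real.exp (-s * (x + y))) * G y)
      = Real.exp (-s * x) * Aint s G x - Real.exp (-s * x) * Dint s G x := by
    have hcg : ∀ y ∈ Ico (0:ℝ) x, (Real.exp (-s * |x - y|) - Real.exp (-s * (x + y))) * G y
        = Real.exp (-s * x) * (Real.exp (s * y) * G y)
          - Real.exp (-s * x) * (Real.exp (-s * y) * G y) := by
      intro y hy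
      have h1 : |x - y| = x - y := abs_of_nonneg (by linarith [hy.2.le])
      rw [h1, show -s * (x - y) = -s * x + s * y by ring,
        show -s * (x + y) = -s * x + -s * y by ring, Real.exp_add, Real.exp_add]
      ring
    rw [setIntegral_congr_fun measurableSet_Ico hcg, integral_sub
      (f := fun y => Real.exp (-s * x) * (Real.exp (s * y) * G y))
      (g := fun y => Real.exp (-s * x) * (Real.exp (-s * y) * G y))
      ((continuous_const.mul hcontes : Continuous fun y => Real.exp (-s * x) * (Real.exp (s * y) * G y)).integrableOn_Icc.mono_set Ico_subset_Icc_self)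
      ((continuous_const.mul hconte : Continuous fun y => Real.exp (-s * x) * (Real.exp (-s * y) * G y)).integrableOn_Icc.mono_set Ico_subset_Icc_self),
      integral_const_mul, integral_const_mul]
    have hA : Aint s G x = ∫ y in Ico 0 x, Real.exp (s * y) * G y := by
      rw [Aint, intervalIntegral.integral_of_le hx, integral_Ioc_eq_integral_Ioo,
        ← integral_Ico_eq_integral_Ioo]
    have hD : Dint s G x = ∫ y in Ico 0 x, Real.exp (-s * y) * G y := by
      rw [Dint, intervalIntegral.integral_of_le hx, integral_Ioc_eq_integral_Ioo,
        ← integral_Ico_eq_integral_Ioo]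
    rw [hA, hD]
  have hpiece2 : (∫ y in Ici x, (Real.exp (-s * |x - y|) - Real.exp (-s * (x + y))) * G y)
      = Real.exp (s * x) * (B0int s G - Dint s G x)
        - Real.exp (-s * x) * (B0int s G - Dint s G x) := by
    have hcg : ∀ y ∈ Ici x, (Real.exp (-s * |x - y|) - Real.exp (-s * (x + y))) * G y
        = Real.exp (s * x) * (Real.exp (-s * y) * G y)
          - Real.exp (-s * x) * (Real.exp (-s * y) * G y) := by
      intro y hy
      have h1 : |x - y| = y - x := by rw [abs_sub_comm]; exact abs_of_nonneg (by linarith [hy.out])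
      rw [h1, show -s * (y - x) = s * x + -s * y by ring,
        show -s * (x + y) = -s * x + -s * y by ring, Real.exp_add, Real.exp_add]
      ring
    rw [setIntegral_congr_fun measurableSet_Ici hcg, integral_sub
      ((aux_intOn hs hGc hGb x).const_mul _) ((aux_intOn hs hGc hGb x).const_mul _),
      integral_const_mul, integral_const_mul, aux_split hs hGc hGb hx]
  rw [hsplit, hpiece1, hpiece2, Fint]
  ring


end core3

noncomputable def F1int (s : ℝ) (G : ℝ → ℝ) (x : ℝ) : ℝ :=
  -Real.exp (-s * x) * Aint s G x + Real.exp (s * x) * (B0int s G - Dint s G x)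
    + Real.exp (-s * x) * B0int s G

section core4
variable {s M : ℝ} {G : ℝ → ℝ}

lemma aux_hdF (hs : 0 < s) (hGc : Continuous G) (x : ℝ) :
    HasDerivAt (Fint s G) (F1int s G x) x := by
  have hA : HasDerivAt (fun t => Aint s G t) (Real.exp (s * x) * G x) x := aux_ftc hGc s x
  have hD : HasDerivAt (fun t => Dint s G t) (Real.exp (-s * x) * G x) x := aux_ftc hGc (-s) x
  have hd := HasDerivAt.const_mul (1 / s)
    ((((aux_hde (-s) x).mul hA).add
      ((aux_hde s x).mul ((hasDerivAt_const x (B0int s G)).sub hD))).sub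
      ((aux_hde (-s) x).mul_const (B0int s G)))
  refine hd.congr_deriv ?_
  simp only [Pi.sub_apply, Pi.mul_apply, Pi.add_apply, Pi.neg_apply]
  rw [F1int]
  have hss : s ≠ 0 := hs.ne'
  field_simp
  ring

lemma aux_hdF1 (hs : 0 < s) (hGc : Continuous G) (x : ℝ) :
    HasDerivAt (F1int s G) (s ^ 2 * Fint s G x - 2 * G x) x := by
  have hA : HasDerivAt (fun t => Aint s G t) (Real.exp (s * x) * G x) x := aux_ftc hGc s x
  have hD : HasDerivAt (fun t => Dint s G t) (Real.exp (-s * x) * G x) x := aux_ftc hGc (-s) x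
  have hd := (((aux_hde (-s) x).neg.mul hA).add
      ((aux_hde s x).mul ((hasDerivAt_const x (B0int s G)).sub hD))).add
      ((aux_hde (-s) x).mul_const (B0int s G))
  refine hd.congr_deriv ?_
  simp only [Pi.sub_apply, Pi.mul_apply, Pi.add_apply, Pi.neg_apply]
  rw [Fint, neg_mul s x, Real.exp_neg]
  have h0 : Real.exp (s * x) ≠ 0 := (Real.exp_pos _).ne'
  have hss : s ≠ 0 := hs.ne'
  field_simp
  ring

end core4

section core5
variable {s M : ℝ} {G : ℝ → ℝ}

lemma aux_exp_Ici (s a : ℝ) (hs : 0 < s) :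
    ∫ y in Ici a, Real.exp (-s * y) = Real.exp (-s * a) / s := by
  rw [integral_Ici_eq_integral_Ioi]; exact aux_exp_Ioi s a hs

lemma aux_bound_B0 (hs : 0 < s) (hGc : Continuous G) (hGb : ∀ y, |G y| ≤ M) (a : ℝ) :
    |∫ y in Ici a, Real.exp (-s * y) * G y| ≤ M * Real.exp (-s * a) / s := by
  have h : ‖∫ y in Ici a, Real.exp (-s * y) * G y‖ ≤ ∫ y in Ici a, M * Real.exp (-s * y) := by
    refine norm_integral_le_of_norm_le
      ((integrableOn_Ici_iff_integrableOn_Ioi).2 ((exp_neg_integrableOn_Ioi a hs).const_mul M))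
      (Filter.Eventually.of_forall fun y => ?_)
    rw [Real.norm_eq_abs, abs_mul, Real.abs_exp]
    calc Real.exp (-s * y) * |G y| ≤ Real.exp (-s * y) * M :=
        mul_le_mul_of_nonneg_left (hGb y) (Real.exp_pos _).le
      _ = M * Real.exp (-s * y) := mul_comm _ _
  rw [Real.norm_eq_abs, integral_const_mul, aux_exp_Ici s a hs, ← mul_div_assoc] at h
  exact h

lemma aux_bound_A (hs : 0 < s) (hGc : Continuous G) (hGb : ∀ y, |G y| ≤ M) {x : ℝ} (hx : 0 ≤ x) :
    |Aint s G x| ≤ M * (Real.exp (s * x) - 1) / s := by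
  have h : ‖∫ y in (0:ℝ)..x, Real.exp (s * y) * G y‖ ≤ |∫ y in (0:ℝ)..x, M * Real.exp (s * y)| := by
    refine intervalIntegral.norm_integral_le_abs_of_norm_le
      (Filter.Eventually.of_forall fun y => ?_)
      ((continuous_const.mul (aux_cont_exp s)).intervalIntegrable _ _)
    rw [Real.norm_eq_abs, abs_mul, Real.abs_exp]
    calc Real.exp (s * y) * |G y| ≤ Real.exp (s * y) * M :=
        mul_le_mul_of_nonneg_left (hGb y) (Real.exp_pos _).le
      _ = M * Real.exp (s * y) := mul_comm _ _
  have hM : 0 ≤ M := le_trans (abs_nonneg _) (hGb 0)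
  have he1 : 1 ≤ Real.exp (s * x) := Real.one_le_exp (by positivity)
  have h2 : (0:ℝ) ≤ M * ((Real.exp (s * x) - 1) / s) :=
    mul_nonneg hM (div_nonneg (by linarith) hs.le)
  rw [Real.norm_eq_abs, intervalIntegral.integral_const_mul, aux_exp_interval s 0 x hs.ne',
    mul_zero, Real.exp_zero, abs_of_nonneg h2, ← mul_div_assoc] at h
  exact h

lemma aux_bound_BD (hs : 0 < s) (hGc : Continuous G) (hGb : ∀ y, |G y| ≤ M) {x : ℝ} (hx : 0 ≤ x) :
    |B0int s G - Dint s G x| ≤ M * Real.exp (-s * x) / s := by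
  rw [aux_split hs hGc hGb hx]; exact aux_bound_B0 hs hGc hGb x

lemma aux_bound_F (hs : 0 < s) (hGc : Continuous G) (hGb : ∀ y, |G y| ≤ M) {x : ℝ} (hx : 0 ≤ x) :
    |Fint s G x| ≤ 3 * M / s ^ 2 := by
  have hM : 0 ≤ M := le_trans (abs_nonneg _) (hGb 0)
  have hA := aux_bound_A hs hGc hGb hx
  have hB := aux_bound_BD hs hGc hGb hx
  have hB0 : |B0int s G| ≤ M / s := by
    have h := aux_bound_B0 hs hGc hGb 0
    rw [mul_zero, Real.exp_zero, mul_one] at h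
    exact h
  have hexp1 : Real.exp (-s * x) ≤ 1 := Real.exp_le_one_iff.2 (by nlinarith)
  have hepos := Real.exp_pos (s * x)
  have henpos := Real.exp_pos (-s * x)
  have hee : Real.exp (-s * x) * Real.exp (s * x) = 1 := by
    rw [← Real.exp_add]
    norm_num
  have t1 : |Real.exp (-s * x) * Aint s G x| ≤ M / s := by
    rw [abs_mul, Real.abs_exp]
    calc Real.exp (-s * x) * |Aint s G x|
        ≤ Real.exp (-s * x) * (M * (Real.exp (s * x) - 1) / s) :=
          mul_le_mul_of_nonneg_left hA henpos.le
      _ = M / s * (Real.exp (-s * x) * Real.exp (s * x)) - M / s * Real.exp (-s * x) := by ring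
      _ = M / s * 1 - M / s * Real.exp (-s * x) := by rw [hee]
      _ ≤ M / s := by nlinarith [mul_nonneg (div_nonneg hM hs.le) henpos.le]
  have t2 : |Real.exp (s * x) * (B0int s G - Dint s G x)| ≤ M / s := by
    rw [abs_mul, Real.abs_exp]
    calc Real.exp (s * x) * |B0int s G - Dint s G x|
        ≤ Real.exp (s * x) * (M * Real.exp (-s * x) / s) :=
          mul_le_mul_of_nonneg_left hB hepos.le
      _ = M / s * (Real.exp (-s * x) * Real.exp (s * x)) := by ring
      _ = M / s := by rw [hee, mul_one]
  have t3 : |Real.exp (-s * x) * B0int s G| ≤ M / s := by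
    rw [abs_mul, Real.abs_exp]
    calc Real.exp (-s * x) * |B0int s G| ≤ 1 * (M / s) :=
        mul_le_mul hexp1 hB0 (abs_nonneg _) one_pos.le
      _ = M / s := one_mul _
  have habs : |Real.exp (-s * x) * Aint s G x + Real.exp (s * x) * (B0int s G - Dint s G x)
      - Real.exp (-s * x) * B0int s G| ≤ 3 * M / s := by
    calc |Real.exp (-s * x) * Aint s G x + Real.exp (s * x) * (B0int s G - Dint s G x)
        - Real.exp (-s * x) * B0int s G|
        ≤ |Real.exp (-s * x) * Aint s G x + Real.exp (s * x) * (B0int s G - Dint s G x)|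
          + |Real.exp (-s * x) * B0int s G| := abs_sub _ _
      _ ≤ |Real.exp (-s * x) * Aint s G x| + |Real.exp (s * x) * (B0int s G - Dint s G x)|
          + |Real.exp (-s * x) * B0int s G| := by
            linarith [abs_add_le (Real.exp (-s * x) * Aint s G x)
              (Real.exp (s * x) * (B0int s G - Dint s G x))]
      _ ≤ M / s + M / s + M / s := by linarith
      _ = 3 * M / s := by ring
  rw [Fint, abs_mul, abs_of_nonneg (by positivity : (0:ℝ) ≤ 1 / s)]
  calc 1 / s * |Real.exp (-s * x) * Aint s G x + Real.exp (s * x) * (B0int s G - Dint s G x)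
      - Real.exp (-s * x) * B0int s G| ≤ 1 / s * (3 * M / s) :=
        mul_le_mul_of_nonneg_left habs (by positivity)
    _ = 3 * M / s ^ 2 := by
        rw [sq]
        field_simp

end core5

section core6
variable {s M : ℝ} {G : ℝ → ℝ}

lemma aux_kernel_intOn (hs : 0 < s) {x : ℝ} (hx : 0 ≤ x) :
    IntegrableOn (fun y => Real.exp (-s * |x - y|)) (Ici 0) := by
  rw [integrableOn_Ici_iff_integrableOn_Ioi]
  refine Integrable.mono' ((exp_neg_integrableOn_Ioi 0 hs).const_mul (Real.exp (s * x)))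
    ((Real.continuous_exp.comp ((continuous_const.mul
      (continuous_const.sub continuous_id).abs))).aestronglyMeasurable)
    (Filter.Eventually.of_forall fun y => ?_)
  rw [Real.norm_eq_abs, Real.abs_exp, ← Real.exp_add]
  apply Real.exp_le_exp.2
  have : y - x ≤ |x - y| := by rw [abs_sub_comm]; exact le_abs_self _
  nlinarith [hs.le]

lemma aux_kernel_le (hs : 0 < s) {x : ℝ} (hx : 0 ≤ x) :
    ∫ y in Ici (0:ℝ), Real.exp (-s * |x - y|) ≤ 2 / s := by
  have hsplit : (∫ y in Ici (0:ℝ), Real.exp (-s * |x - y|))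
      = (∫ y in Ico 0 x, Real.exp (-s * |x - y|)) + ∫ y in Ici x, Real.exp (-s * |x - y|) := by
    rw [← Ico_union_Ici_eq_Ici hx]
    exact setIntegral_union ((Iio_disjoint_Ici le_rfl).mono_left Ico_subset_Iio_self)
      measurableSet_Ici
      ((aux_kernel_intOn hs hx).mono_set Ico_subset_Ici_self)
      ((aux_kernel_intOn hs hx).mono_set (Ici_subset_Ici.2 hx))
  have hee : Real.exp (-s * x) * Real.exp (s * x) = 1 := by rw [← Real.exp_add]; norm_num
  have hp1 : (∫ y in Ico 0 x, Real.exp (-s * |x - y|)) ≤ 1 / s := by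
    have hcg : ∀ y ∈ Ico (0:ℝ) x, Real.exp (-s * |x - y|)
        = Real.exp (-s * x) * Real.exp (s * y) := by
      intro y hy
      rw [abs_of_nonneg (by linarith [hy.2.le] : (0:ℝ) ≤ x - y),
        show -s * (x - y) = -s * x + s * y by ring, Real.exp_add]
    rw [setIntegral_congr_fun measurableSet_Ico hcg, integral_const_mul]
    have hIco : (∫ y in Ico (0:ℝ) x, Real.exp (s * y)) = (Real.exp (s * x) - 1) / s := by
      rw [integral_Ico_eq_integral_Ioo, ← integral_Ioc_eq_integral_Ioo,
        ← intervalIntegral.integral_of_le hx, aux_exp_interval s 0 x hs.ne', mul_zero,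
        Real.exp_zero]
    rw [hIco]
    have h3 : Real.exp (-s * x) * ((Real.exp (s * x) - 1) / s) = (1 - Real.exp (-s * x)) / s := by
      rw [← mul_div_assoc]
      congr 1
      linear_combination hee
    rw [h3]
    gcongr
    linarith [Real.exp_pos (-s * x)]
  have hp2 : (∫ y in Ici x, Real.exp (-s * |x - y|)) = 1 / s := by
    have hcg : ∀ y ∈ Ici x, Real.exp (-s * |x - y|)
        = Real.exp (s * x) * Real.exp (-s * y) := by
      intro y hy
      rw [abs_sub_comm, abs_of_nonneg (by linarith [hy.out] : (0:ℝ) ≤ y - x),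
        show -s * (y - x) = s * x + -s * y by ring, Real.exp_add]
    rw [setIntegral_congr_fun measurableSet_Ici hcg, integral_const_mul, aux_exp_Ici s x hs,
      ← mul_div_assoc]
    congr 1
    linear_combination hee
  rw [hsplit]
  have h4 : 1 / s + 1 / s = 2 / s := by ring
  linarith

lemma aux_R0_bound (hs : 0 < s) (hGc : Continuous G) (hGb : ∀ y, |G y| ≤ M) {x : ℝ} (hx : 0 ≤ x) :
    |(1 / s) * ∫ y in Ici (0:ℝ), (Real.exp (-s * |x - y|) - Real.exp (-s * (x + y))) * G y|
      ≤ (2 * M / s ^ 2) * min 1 (2 * s * x) := by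
  have hM : 0 ≤ M := le_trans (abs_nonneg _) (hGb 0)
  have hmin0 : 0 ≤ min 1 (2 * s * x) := le_min one_pos.le (by positivity)
  have hptw : ∀ y ∈ Ici (0:ℝ), ‖(Real.exp (-s * |x - y|) - Real.exp (-s * (x + y))) * G y‖
      ≤ (M * min 1 (2 * s * x)) * Real.exp (-s * |x - y|) := by
    intro y hy
    have hy0 : (0:ℝ) ≤ y := hy
    set t := x + y - |x - y| with ht
    have ht0 : 0 ≤ t := by
      have : |x - y| ≤ x + y := (abs_sub _ _).trans (by
        rw [abs_of_nonneg hx, abs_of_nonneg hy0])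
      linarith
    have ht2 : t ≤ 2 * x := by
      have : -(x - y) ≤ |x - y| := neg_le_abs _
      simp only [ht]; linarith
    have hsplit : Real.exp (-s * (x + y)) = Real.exp (-s * |x - y|) * Real.exp (-s * t) := by
      rw [← Real.exp_add]; congr 1; simp only [ht]; ring
    have hd1 : 1 - Real.exp (-s * t) ≤ min 1 (2 * s * x) := by
      refine le_min (by linarith [Real.exp_pos (-s * t)]) ?_
      have := Real.add_one_le_exp (-s * t)
      nlinarith [hs.le]
    have hd0 : 0 ≤ 1 - Real.exp (-s * t) := by
      have : Real.exp (-s * t) ≤ 1 := Real.exp_le_one_iff.2 (by nlinarith)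
      linarith
    rw [Real.norm_eq_abs, abs_mul, hsplit]
    calc |Real.exp (-s * |x - y|) - Real.exp (-s * |x - y|) * Real.exp (-s * t)| * |G y|
        = Real.exp (-s * |x - y|) * (1 - Real.exp (-s * t)) * |G y| := by
          rw [show Real.exp (-s * |x - y|) - Real.exp (-s * |x - y|) * Real.exp (-s * t)
            = Real.exp (-s * |x - y|) * (1 - Real.exp (-s * t)) by ring,
            abs_mul, Real.abs_exp, abs_of_nonneg hd0]
      _ ≤ Real.exp (-s * |x - y|) * min 1 (2 * s * x) * M := by
          apply mul_le_mul _ (hGb y) (abs_nonneg _)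
          · positivity
          · exact mul_le_mul_of_nonneg_left hd1 (Real.exp_pos _).le
      _ = (M * min 1 (2 * s * x)) * Real.exp (-s * |x - y|) := by ring
  have hnorm : ‖∫ y in Ici (0:ℝ), (Real.exp (-s * |x - y|) - Real.exp (-s * (x + y))) * G y‖
      ≤ ∫ y in Ici (0:ℝ), (M * min 1 (2 * s * x)) * Real.exp (-s * |x - y|) := by
    refine norm_integral_le_of_norm_le ((aux_kernel_intOn hs hx).const_mul _) ?_
    exact (ae_restrict_mem measurableSet_Ici).mono hptw
  rw [integral_const_mul] at hnorm
  have hker := aux_kernel_le hs hx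
  rw [abs_mul, abs_of_nonneg (by positivity : (0:ℝ) ≤ 1 / s), Real.norm_eq_abs] at *
  calc (1 / s) * |∫ y in Ici (0:ℝ), (Real.exp (-s * |x - y|) - Real.exp (-s * (x + y))) * G y|
      ≤ (1 / s) * (M * min 1 (2 * s * x) * (2 / s)) := by
        apply mul_le_mul_of_nonneg_left _ (by positivity)
        refine hnorm.trans ?_
        exact mul_le_mul_of_nonneg_left hker (by positivity)
    _ = (2 * M / s ^ 2) * min 1 (2 * s * x) := by rw [sq]; field_simp

end core6

lemma aux_meas {k : ℕ} {F : Fin k → ℝ → ℝ} (hF : ∀ i, Measurable (F i)) :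
    Measurable fun p : Fin k × ℝ => F p.1 p.2 := by
  have h : Measurable fun q : ℝ × Fin k => F q.2 q.1 :=
    measurable_from_prod_countable_left fun i => hF i
  exact h.comp measurable_swap

lemma aux_minle {c x : ℝ} (hc : 0 ≤ c) (hx : 0 ≤ x) : min 1 (c * x) ≤ max 1 c * min x 1 := by
  rcases le_total x 1 with h | h
  · rw [min_eq_left h]
    calc min 1 (c * x) ≤ c * x := min_le_right _ _
      _ ≤ max 1 c * x := mul_le_mul_of_nonneg_right (le_max_right _ _) hx
  · rw [min_eq_right h]
    calc min 1 (c * x) ≤ 1 := min_le_left _ _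
      _ ≤ max 1 c * 1 := by rw [mul_one]; exact le_max_left _ _

/-- Solution of the resolvent equation for the Laplace operator on the star graph with the
general Feller–Wentzell boundary condition
`(α/2) f''(𝔬) - ∑ βᵢ fᵢ'(0) + γ f(𝔬) = ∫ (f - f(𝔬)) dm`: the function
`f i x = (R⁰_λ g)_i(x) + C̄ e^{-√(2λ)x}` is bounded, twice continuously differentiable on
`[0,∞)`, solves `λ f - (1/2) f'' = g` and satisfies the boundary condition; the constant `C̄`
is well defined (its denominator is finite and positive) and `f i 0 = C̄` for all `i`. -/
theorem stmt16 (k : ℕ) (hk : 2 ≤ k) (lam : ℝ) (hlam : 0 < lam)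
    (α γ : ℝ) (hα : 0 ≤ α) (hγ : 0 ≤ γ) (β : Fin k → ℝ) (hβ : ∀ i, 0 ≤ β i)
    (m : Measure (Fin k × ℝ))
    (hsupp : m {p : Fin k × ℝ | p.2 ≤ 0} = 0)
    (hm1 : ∫⁻ p, ENNReal.ofReal (min p.2 1) ∂m < ⊤)
    (hnd : 0 < α + (∑ i, β i) + γ ∨ m ≠ 0)
    (g : Fin k → ℝ → ℝ) (hgc : ∀ i, ContinuousOn (g i) (Ici 0))
    (hgb : ∀ i, ∃ M : ℝ, ∀ x : ℝ, 0 ≤ x → |g i x| ≤ M)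
    (g0 : ℝ) (hg0 : ∀ i, g i 0 = g0)
    (C : Fin k → ℝ)
    (hC : ∀ i, C i = (1 / Real.sqrt (2 * lam)) *
      ∫ y in Ici (0:ℝ), Real.exp (-(Real.sqrt (2 * lam)) * y) * g i y)
    (R0 : Fin k → ℝ → ℝ)
    (hR0 : ∀ i x, R0 i x = (1 / Real.sqrt (2 * lam)) *
      ∫ y in Ici (0:ℝ),
        (Real.exp (-(Real.sqrt (2 * lam)) * |x - y|) -
          Real.exp (-(Real.sqrt (2 * lam)) * (x + y))) * g i y)
    (Cbar : ℝ)
    (hCbar : Cbar =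
      ((∫ p, R0 p.1 p.2 ∂m) + 2 * Real.sqrt (2 * lam) * (∑ i, β i * C i) + α * g0) /
        (γ + (∫ p, (1 - Real.exp (-(Real.sqrt (2 * lam)) * p.2)) ∂m) +
          lam * α + Real.sqrt (2 * lam) * ∑ i, β i))
    (f : Fin k → ℝ → ℝ)
    (hf : ∀ i x, f i x = R0 i x + Cbar * Real.exp (-(Real.sqrt (2 * lam)) * x)) :
    (Integrable (fun p : Fin k × ℝ => R0 p.1 p.2) m ∧
      Integrable (fun p : Fin k × ℝ => 1 - Real.exp (-(Real.sqrt (2 * lam)) * p.2)) m ∧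
      0 < γ + (∫ p, (1 - Real.exp (-(Real.sqrt (2 * lam)) * p.2)) ∂m) +
          lam * α + Real.sqrt (2 * lam) * ∑ i, β i) ∧
    (∀ i, (∃ M : ℝ, ∀ x : ℝ, 0 ≤ x → |f i x| ≤ M) ∧ ContDiffOn ℝ 2 (f i) (Ici 0) ∧
      f i 0 = Cbar ∧ iteratedDerivWithin 2 (f i) (Ici 0) 0 = 2 * lam * Cbar - 2 * g0) ∧
    (∀ i, ∀ x : ℝ, 0 ≤ x →
      lam * f i x - (1 / 2) * iteratedDerivWithin 2 (f i) (Ici 0) x = g i x) ∧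
    (Integrable (fun p : Fin k × ℝ => f p.1 p.2 - Cbar) m ∧
      α / 2 * (2 * lam * Cbar - 2 * g0) - (∑ i, β i * derivWithin (f i) (Ici 0) 0) + γ * Cbar =
        ∫ p, (f p.1 p.2 - Cbar) ∂m) := by
  have hlam2 : (0:ℝ) < 2 * lam := by linarith
  set s := Real.sqrt (2 * lam) with hsdef
  have hs : 0 < s := Real.sqrt_pos.2 hlam2
  have hs2 : s ^ 2 = 2 * lam := Real.sq_sqrt hlam2.le
  set G : Fin k → ℝ → ℝ := fun i y => g i (max y 0) with hGdef
  have hGc : ∀ i, Continuous (G i) := fun i =>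
    (hgc i).comp_continuous (continuous_id.max continuous_const) fun y => mem_Ici.2 (le_max_right _ _)
  choose M₀ hM₀ using hgb
  set M : ℝ := ∑ i, |M₀ i| with hMdef
  have hGb : ∀ i y, |G i y| ≤ M := fun i y =>
    (hM₀ i _ (le_max_right _ _)).trans ((le_abs_self _).trans
      (Finset.single_le_sum (f := fun j => |M₀ j|) (fun j _ => abs_nonneg _) (Finset.mem_univ i)))
  have hGeq : ∀ i, ∀ x : ℝ, 0 ≤ x → G i x = g i x := fun i x hx => by
    simp only [hGdef, max_eq_left hx]
  have hGzero : ∀ i, G i 0 = g0 := fun i => by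
    rw [hGeq i 0 le_rfl, hg0 i]
  -- R0 in terms of G and Fint
  have hR0G : ∀ i x, R0 i x = (1 / s) * ∫ y in Ici (0:ℝ),
      (Real.exp (-s * |x - y|) - Real.exp (-s * (x + y))) * G i y := by
    intro i x
    rw [hR0 i x]
    congr 1
    refine setIntegral_congr_fun measurableSet_Ici fun y hy => ?_
    rw [hGeq i y hy]
  have hR0F : ∀ i, ∀ x : ℝ, 0 ≤ x → R0 i x = Fint s (G i) x := fun i x hx => by
    rw [hR0G i x]; exact aux_repr hs (hGc i) (hGb i) hx
  have hCB : ∀ i, B0int s (G i) = s * C i := by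
    intro i
    have h1 : B0int s (G i) = ∫ y in Ici (0:ℝ), Real.exp (-s * y) * g i y :=
      setIntegral_congr_fun measurableSet_Ici fun y hy => by rw [hGeq i y hy]
    rw [h1, hC i]
    field_simp
  -- derivatives of the smooth extension
  have hdφ : ∀ i x, HasDerivAt (fun t => Fint s (G i) t + Cbar * Real.exp (-s * t))
      (F1int s (G i) x + -(s * Cbar) * Real.exp (-s * x)) x := by
    intro i x
    have h := (aux_hdF hs (hGc i) x).add ((aux_hde (-s) x).const_mul Cbar)
    refine h.congr_deriv ?_
    ring
  have hdφ1 : ∀ i x, HasDerivAt (fun t => F1int s (G i) t + -(s * Cbar) * Real.exp (-s * t))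
      (s ^ 2 * (Fint s (G i) x + Cbar * Real.exp (-s * x)) - 2 * G i x) x := by
    intro i x
    have h := (aux_hdF1 hs (hGc i) x).add ((aux_hde (-s) x).const_mul (-(s * Cbar)))
    refine h.congr_deriv ?_
    ring
  have hEq : ∀ i, EqOn (f i) (fun t => Fint s (G i) t + Cbar * Real.exp (-s * t)) (Ici 0) :=
    fun i x hx => by rw [hf i x, hR0F i x hx]
  have hdw1 : ∀ i, ∀ x ∈ Ici (0:ℝ), derivWithin (f i) (Ici 0) x
      = F1int s (G i) x + -(s * Cbar) * Real.exp (-s * x) := by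
    intro i x hx
    exact (((hdφ i x).hasDerivWithinAt).congr (fun y hy => hEq i hy) (hEq i hx)).derivWithin
      (uniqueDiffOn_Ici 0 x hx)
  have hdw2 : ∀ i, ∀ x ∈ Ici (0:ℝ), derivWithin (derivWithin (f i) (Ici 0)) (Ici 0) x
      = s ^ 2 * (Fint s (G i) x + Cbar * Real.exp (-s * x)) - 2 * G i x := by
    intro i x hx
    exact (((hdφ1 i x).hasDerivWithinAt).congr (fun y hy => hdw1 i y hy)
      (hdw1 i x hx)).derivWithin (uniqueDiffOn_Ici 0 x hx)
  have hit2 : ∀ i, ∀ x ∈ Ici (0:ℝ), iteratedDerivWithin 2 (f i) (Ici 0) x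
      = s ^ 2 * (Fint s (G i) x + Cbar * Real.exp (-s * x)) - 2 * G i x := by
    intro i x hx
    have hu := uniqueDiffOn_Ici (0:ℝ)
    rw [show (2 : ℕ) = 1 + 1 by norm_num, iteratedDerivWithin_succ,
      iteratedDerivWithin_one]
    exact hdw2 i x hx
  have hF0 : ∀ i, Fint s (G i) 0 = 0 := fun i => by
    simp [Fint, Aint, Dint]
  have hF10 : ∀ i, F1int s (G i) 0 = 2 * s * C i := fun i => by
    simp [F1int, Aint, Dint, hCB i]
    ring
  have hf0 : ∀ i, f i 0 = Cbar := fun i => by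
    rw [hEq i self_mem_Ici]
    simp [hF0 i]
  -- a.e. positivity of second coordinate
  have hae : ∀ᵐ p ∂m, 0 < p.2 := by
    rw [ae_iff]
    simpa [not_lt] using hsupp
  -- integrability of min
  have hminint : Integrable (fun p : Fin k × ℝ => min p.2 1) m := by
    refine ⟨(continuous_snd.min continuous_const).aestronglyMeasurable, ?_⟩
    rw [hasFiniteIntegral_iff_norm]
    have heq : ∀ᵐ p ∂m, ENNReal.ofReal ‖min p.2 1‖ = ENNReal.ofReal (min p.2 1) :=
      hae.mono fun p hp => by
        rw [Real.norm_eq_abs, abs_of_nonneg (le_min hp.le one_pos.le)]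
    rwa [lintegral_congr_ae heq]
  -- integrability of 1 - exp
  have hexpint : Integrable (fun p : Fin k × ℝ => 1 - Real.exp (-s * p.2)) m := by
    refine Integrable.mono' (hminint.const_mul (max 1 s))
      ((continuous_const.sub (Real.continuous_exp.comp
        (continuous_const.mul continuous_snd))).aestronglyMeasurable)
      (hae.mono fun p hp => ?_)
    have h1 : Real.exp (-s * p.2) ≤ 1 := Real.exp_le_one_iff.2 (by nlinarith)
    have h2 : 1 - Real.exp (-s * p.2) ≤ min 1 (s * p.2) := by
      refine le_min (by linarith [Real.exp_pos (-s * p.2)]) ?_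
      have := Real.add_one_le_exp (-s * p.2)
      linarith
    rw [Real.norm_eq_abs, abs_of_nonneg (by linarith)]
    calc 1 - Real.exp (-s * p.2) ≤ min 1 (s * p.2) := h2
      _ ≤ max 1 s * min p.2 1 := aux_minle hs.le hp.le
  -- integrability of R0
  have hR0b : ∀ i, ∀ x : ℝ, 0 ≤ x → |R0 i x| ≤ (2 * M / s ^ 2) * min 1 (2 * s * x) := by
    intro i x hx
    rw [hR0G i x]
    exact aux_R0_bound hs (hGc i) (hGb i) hx
  have hM : 0 ≤ M := le_trans (abs_nonneg _) (hGb ⟨0, by omega⟩ 0)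
  have hR0meas : AEStronglyMeasurable (fun p : Fin k × ℝ => R0 p.1 p.2) m := by
    have hFc : ∀ i, Continuous (Fint s (G i)) := fun i =>
      Differentiable.continuous fun x => (aux_hdF hs (hGc i) x).differentiableAt
    exact ((aux_meas (F := fun i => Fint s (G i))
      fun i => (hFc i).measurable).aestronglyMeasurable).congr
      (hae.mono fun p hp => (hR0F p.1 p.2 hp.le).symm)
  have hR0int : Integrable (fun p : Fin k × ℝ => R0 p.1 p.2) m := by
    refine Integrable.mono' (hminint.const_mul ((2 * M / s ^ 2) * max 1 (2 * s))) hR0meas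
      (hae.mono fun p hp => ?_)
    rw [Real.norm_eq_abs]
    calc |R0 p.1 p.2| ≤ (2 * M / s ^ 2) * min 1 (2 * s * p.2) := hR0b p.1 p.2 hp.le
      _ ≤ (2 * M / s ^ 2) * (max 1 (2 * s) * min p.2 1) :=
          mul_le_mul_of_nonneg_left (aux_minle (by positivity) hp.le) (by positivity)
      _ = (2 * M / s ^ 2) * max 1 (2 * s) * min p.2 1 := by ring
  -- integrability of f - Cbar
  have heqf : (fun p : Fin k × ℝ => f p.1 p.2 - Cbar)
      = fun p : Fin k × ℝ => R0 p.1 p.2 - Cbar * (1 - Real.exp (-s * p.2)) := by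
    funext p
    rw [hf p.1 p.2]
    ring
  have hfint : Integrable (fun p : Fin k × ℝ => f p.1 p.2 - Cbar) m := by
    rw [heqf]
    exact hR0int.sub (hexpint.const_mul Cbar)
  have hIf : (∫ p, (f p.1 p.2 - Cbar) ∂m)
      = (∫ p, R0 p.1 p.2 ∂m) - Cbar * ∫ p, (1 - Real.exp (-s * p.2)) ∂m := by
    rw [heqf, integral_sub hR0int (hexpint.const_mul Cbar), integral_const_mul]
  -- positivity of the denominator
  have hIexp0 : 0 ≤ ∫ p, (1 - Real.exp (-s * p.2)) ∂m := by
    refine integral_nonneg_of_ae (hae.mono fun p hp => ?_)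
    simp only [Pi.zero_apply]
    have : Real.exp (-s * p.2) ≤ 1 := Real.exp_le_one_iff.2 (by nlinarith)
    linarith
  have hsumβ : 0 ≤ ∑ i, β i := Finset.sum_nonneg fun i _ => hβ i
  have hDpos : 0 < γ + (∫ p, (1 - Real.exp (-s * p.2)) ∂m) + lam * α + s * ∑ i, β i := by
    rcases hnd with hcase | hcase
    · have hc : 0 < min (min lam s) 1 := lt_min (lt_min hlam hs) one_pos
      have h1 : min (min lam s) 1 * α ≤ lam * α :=
        mul_le_mul_of_nonneg_right ((min_le_left _ _).trans (min_le_left _ _)) hα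
      have h2 : min (min lam s) 1 * (∑ i, β i) ≤ s * ∑ i, β i :=
        mul_le_mul_of_nonneg_right ((min_le_left _ _).trans (min_le_right _ _)) hsumβ
      have h3 : min (min lam s) 1 * γ ≤ γ := by
        nlinarith [min_le_right (min lam s) 1]
      nlinarith
    · have hpos : 0 < m {p : Fin k × ℝ | 0 < p.2} := by
        rcases eq_or_ne (m {p : Fin k × ℝ | 0 < p.2}) 0 with h0 | h0
        · exfalso
          apply hcase
          rw [← Measure.measure_univ_eq_zero]
          have hu : (univ : Set (Fin k × ℝ)) ⊆ {p : Fin k × ℝ | p.2 ≤ 0} ∪ {p | 0 < p.2} :=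
            fun p _ => (le_or_gt p.2 0).imp id id
          refine le_antisymm ((measure_mono hu).trans ?_) (zero_le)
          calc m ({p : Fin k × ℝ | p.2 ≤ 0} ∪ {p : Fin k × ℝ | 0 < p.2})
              ≤ m {p : Fin k × ℝ | p.2 ≤ 0} + m {p : Fin k × ℝ | 0 < p.2} := measure_union_le _ _
            _ = 0 := by rw [hsupp, h0, add_zero]
        · exact pos_iff_ne_zero.2 h0
      have hIpos : 0 < ∫ p, (1 - Real.exp (-s * p.2)) ∂m := by
        rw [integral_pos_iff_support_of_nonneg_ae (hae.mono fun p hp => by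
          have : Real.exp (-s * p.2) ≤ 1 := Real.exp_le_one_iff.2 (by nlinarith)
          simp only [Pi.zero_apply]
          linarith) hexpint]
        refine hpos.trans_le (measure_mono fun p hp => ?_)
        have h1 : Real.exp (-s * p.2) < 1 := by
          rw [Real.exp_lt_one_iff]
          nlinarith [Set.mem_setOf_eq ▸ hp]
        simp only [Function.mem_support]
        intro hzero
        nlinarith
      have := mul_nonneg hlam.le hα
      have := mul_nonneg hs.le hsumβ
      linarith
  -- the sum over i of the boundary derivatives
  have hsum : (∑ i, β i * derivWithin (f i) (Ici 0) 0)
      = 2 * s * (∑ i, β i * C i) - s * Cbar * ∑ i, β i := by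
    rw [Finset.mul_sum, Finset.mul_sum, ← Finset.sum_sub_distrib]
    refine Finset.sum_congr rfl fun i _ => ?_
    rw [hdw1 i 0 self_mem_Ici, hF10 i]
    simp only [mul_zero, neg_zero, Real.exp_zero]
    ring
  -- assemble
  refine ⟨⟨hR0int, hexpint, hDpos⟩, fun i => ⟨?_, ?_, hf0 i, ?_⟩, fun i x hx => ?_, hfint, ?_⟩
  · -- boundedness
    refine ⟨3 * M / s ^ 2 + |Cbar|, fun x hx => ?_⟩
    rw [hf i x, hR0F i x hx]
    calc |Fint s (G i) x + Cbar * Real.exp (-s * x)|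
        ≤ |Fint s (G i) x| + |Cbar * Real.exp (-s * x)| := abs_add_le _ _
      _ ≤ 3 * M / s ^ 2 + |Cbar| := by
          have h1 := aux_bound_F hs (hGc i) (hGb i) hx
          have h2 : |Cbar * Real.exp (-s * x)| ≤ |Cbar| := by
            rw [abs_mul, Real.abs_exp]
            nlinarith [abs_nonneg Cbar, Real.exp_le_one_iff.2
              (show -s * x ≤ 0 by nlinarith), Real.exp_pos (-s * x)]
          linarith
  · -- C² regularity
    refine ContDiffOn.congr ?_ (hEq i)
    apply ContDiff.contDiffOn
    have hφd : Differentiable ℝ (fun t => Fint s (G i) t + Cbar * Real.exp (-s * t)) :=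
      fun x => (hdφ i x).differentiableAt
    have hderiv : deriv (fun t => Fint s (G i) t + Cbar * Real.exp (-s * t))
        = fun x => F1int s (G i) x + -(s * Cbar) * Real.exp (-s * x) :=
      funext fun x => (hdφ i x).deriv
    have hφ1d : Differentiable ℝ (fun x => F1int s (G i) x + -(s * Cbar) * Real.exp (-s * x)) :=
      fun x => (hdφ1 i x).differentiableAt
    have hderiv1 : deriv (fun x => F1int s (G i) x + -(s * Cbar) * Real.exp (-s * x))
        = fun x => s ^ 2 * (Fint s (G i) x + Cbar * Real.exp (-s * x)) - 2 * G i x :=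
      funext fun x => (hdφ1 i x).deriv
    have hcont2 : Continuous (fun x => s ^ 2 * (Fint s (G i) x + Cbar * Real.exp (-s * x))
        - 2 * G i x) :=
      (continuous_const.mul hφd.continuous).sub (continuous_const.mul (hGc i))
    rw [show ((2 : WithTop ℕ∞)) = (1 + 1 : WithTop ℕ∞) by norm_num]
    rw [contDiff_succ_iff_deriv]
    refine ⟨hφd, by simp, ?_⟩
    rw [hderiv, contDiff_one_iff_deriv]
    exact ⟨hφ1d, hderiv1 ▸ hcont2⟩
  · -- second derivative at 0
    rw [hit2 i 0 self_mem_Ici, hF0 i, hGzero i]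
    simp only [mul_zero, neg_zero, Real.exp_zero]
    rw [hs2]
    ring
  · -- the resolvent equation
    rw [hit2 i x hx, hEq i hx, hs2, hGeq i x hx]
    ring
  · -- the boundary condition
    rw [hsum, hIf]
    rw [eq_div_iff hDpos.ne'] at hCbar
    linear_combination hCbar
end

section
/- Let k ≥ 1. For each n ∈ ℕ let ℓ_{n,1}, …, ℓ_{n,k} : [0,∞) → [0,∞) be nondecreasing functions, and let ℓ_1, …, ℓ_k : [0,∞) → [0,∞) be nondecreasing continuous functions having no common levels of constancy; assume that for each i, ℓ_{n,i} converges to ℓ_i uniformly on every compact subset of [0,∞) as n → ∞. Suppose additionally that for each n there exists a solution (t_{n,1}, …, t_{n,k}) of the balance problem for (ℓ_{n,1}, …, ℓ_{n,k}), i.e., nondecreasing functions t_{n,i} : [0,∞) → [0,∞) with Σ_{i=1}^k t_{n,i}(s) = s for all s ≥ 0 and ℓ_{n,i}(t_{n,i}(s)) = ℓ_{n,j}(t_{n,j}(s)) for all i, j, s. Then the balance problem for (ℓ_1, …, ℓ_k) has a unique solution (t_1, …, t_k), the t_i are nondecreasing, continuous, nonnegative, and for each i the functions t_{n,i} converge to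 t_i uniformly on every compact subset of [0,∞) as n → ∞. -/
open scoped NNReal
open Filter Topology

lemma bal_le {k : ℕ} {ℓ t : Fin k → ℝ≥0 → ℝ≥0} (ht : IsBalanceSolution ℓ t)
    (i : Fin k) (s : ℝ≥0) : t i s ≤ s := by
  calc t i s ≤ ∑ j, t j s :=
        Finset.single_le_sum (f := fun j => t j s) (fun j _ => zero_le) (Finset.mem_univ i)
  _ = s := ht.2.1 s

lemma bal_lip {k : ℕ} {ℓ t : Fin k → ℝ≥0 → ℝ≥0} (ht : IsBalanceSolution ℓ t)
    (i : Fin k) : LipschitzWith 1 (t i) := by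
  have key : ∀ s s' : ℝ≥0, s ≤ s' → (t i s' : ℝ) - t i s ≤ (s' : ℝ) - s := by
    intro s s' hss
    have h1 : ∑ j, ((t j s' : ℝ) - t j s) = (s' : ℝ) - s := by
      rw [Finset.sum_sub_distrib, ← NNReal.coe_sum, ← NNReal.coe_sum, ht.2.1, ht.2.1]
    rw [← h1]
    exact Finset.single_le_sum (f := fun j => (t j s' : ℝ) - t j s)
      (fun j _ => sub_nonneg.2 (by exact_mod_cast ht.1 j hss)) (Finset.mem_univ i)
  apply LipschitzWith.of_dist_le_mul
  intro x y
  rcases le_total x y with h | h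
  · rw [NNReal.dist_eq, NNReal.dist_eq, NNReal.coe_one, one_mul,
      abs_of_nonpos (by simpa using (NNReal.coe_le_coe.2 (ht.1 i h))),
      abs_of_nonpos (by simpa using (NNReal.coe_le_coe.2 h))]
    have := key x y h; linarith
  · rw [NNReal.dist_eq, NNReal.dist_eq, NNReal.coe_one, one_mul,
      abs_of_nonneg (by simpa using (NNReal.coe_le_coe.2 (ht.1 i h))),
      abs_of_nonneg (by simpa using (NNReal.coe_le_coe.2 h))]
    have := key y x h; linarith

lemma bal_uniq {k : ℕ} {ℓ : Fin k → ℝ≥0 → ℝ≥0} (hmono : ∀ i, Monotone (ℓ i))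
    (hnc : NoCommonLevelsOfConstancy ℓ) {t t' : Fin k → ℝ≥0 → ℝ≥0}
    (ht : IsBalanceSolution ℓ t) (ht' : IsBalanceSolution ℓ t') : t' = t := by
  have key : ∀ (u v : Fin k → ℝ≥0 → ℝ≥0), IsBalanceSolution ℓ u → IsBalanceSolution ℓ v →
      ∀ i s, ¬ (v i s < u i s) := by
    intro u v hu hv i s hlt
    obtain ⟨j, hj⟩ : ∃ j, u j s < v j s := by
      by_contra h
      push_neg at h
      have hsum : ∑ j, v j s < ∑ j, u j s :=
        Finset.sum_lt_sum (fun j _ => h j) ⟨i, Finset.mem_univ i, hlt⟩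
      rw [hu.2.1, hv.2.1] at hsum
      exact lt_irrefl _ hsum
    have hij : i ≠ j := by rintro rfl; exact lt_asymm hlt hj
    -- levels
    have hA : ℓ i (u i s) = ℓ j (u j s) := hu.2.2 i j s
    have hB : ℓ i (v i s) = ℓ j (v j s) := hv.2.2 i j s
    have h1 : ℓ i (v i s) ≤ ℓ i (u i s) := hmono i hlt.le
    have h2 : ℓ i (u i s) ≤ ℓ i (v i s) := by
      rw [hA, hB]; exact hmono j hj.le
    have heq : ℓ i (v i s) = ℓ i (u i s) := le_antisymm h1 h2
    exact hnc ⟨i, j, v i s, u i s, u j s, v j s, hij, hlt, hj, heq, hA,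
      by rw [← hA, ← heq, hB]⟩
  funext i s
  by_contra hne
  rcases lt_or_gt_of_ne hne with h | h
  · exact key t t' ht ht' i s h
  · exact key t' t ht' ht i s h

lemma bal_ultra {k : ℕ} {ℓn : ℕ → Fin k → ℝ≥0 → ℝ≥0} {ℓ : Fin k → ℝ≥0 → ℝ≥0}
    (hcont : ∀ i, Continuous (ℓ i))
    (hconv : ∀ i, ∀ K : Set ℝ≥0, IsCompact K →
      TendstoUniformlyOn (fun n => ℓn n i) (ℓ i) atTop K)
    {tn : ℕ → Fin k → ℝ≥0 → ℝ≥0} (htn : ∀ n, IsBalanceSolution (ℓn n) (tn n))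
    (U : Ultrafilter ℕ) (hU : (U : Filter ℕ) ≤ atTop) :
    ∃ t : Fin k → ℝ≥0 → ℝ≥0, IsBalanceSolution ℓ t ∧
      ∀ i s, Tendsto (fun n => tn n i s) (U : Filter ℕ) (𝓝 (t i s)) := by
  have hle : ∀ n i s, tn n i s ≤ s := fun n => bal_le (htn n)
  have hlim : ∀ i s, ∃ c, Tendsto (fun n => tn n i s) (U : Filter ℕ) (𝓝 c) := by
    intro i s
    obtain ⟨c, -, hc⟩ := (isCompact_Icc : IsCompact (Set.Icc (0:ℝ≥0) s)).ultrafilter_le_nhds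
      (U.map (fun n => tn n i s)) (by
        rw [Ultrafilter.coe_map, Filter.le_principal_iff, Filter.mem_map]
        exact Filter.univ_mem' fun n => ⟨zero_le, hle n i s⟩)
    exact ⟨c, hc⟩
  choose t htlim using hlim
  have htle : ∀ i s, t i s ≤ s := fun i s =>
    le_of_tendsto (htlim i s) (Filter.Eventually.of_forall fun n => hle n i s)
  have hunifU : ∀ i s, TendstoUniformlyOn (fun n => ℓn n i) (ℓ i) (U : Filter ℕ)
      (Set.Icc 0 s) := fun i s u hu =>
    ((hconv i _ isCompact_Icc) u hu).filter_mono hU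
  have hcomp : ∀ i s, Tendsto (fun n => ℓn n i (tn n i s)) (U : Filter ℕ)
      (𝓝 (ℓ i (t i s))) := by
    intro i s
    refine (hunifU i s).tendsto_comp ((hcont i).continuousWithinAt) ?_
    exact tendsto_nhdsWithin_of_tendsto_nhds_of_eventually_within _ (htlim i s)
      (Filter.Eventually.of_forall fun n => ⟨zero_le, hle n i s⟩)
  refine ⟨t, ⟨?_, ?_, ?_⟩, htlim⟩
  · intro i s s' hss
    exact le_of_tendsto_of_tendsto' (htlim i s) (htlim i s') fun n => (htn n).1 i hss
  · intro s
    have h1 : Tendsto (fun n => ∑ j, tn n j s) (U : Filter ℕ) (𝓝 (∑ j, t j s)) :=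
      tendsto_finset_sum _ fun j _ => htlim j s
    have h2 : (fun n => ∑ j, tn n j s) = fun _ => s := funext fun n => (htn n).2.1 s
    rw [h2] at h1
    exact tendsto_nhds_unique h1 tendsto_const_nhds
  · intro i j s
    have h2 : Tendsto (fun n => ℓn n i (tn n i s)) (U : Filter ℕ) (𝓝 (ℓ j (t j s))) :=
      (hcomp j s).congr fun n => ((htn n).2.2 i j s).symm
    exact tendsto_nhds_unique (hcomp i s) h2

/-- Stability of the balance problem: if nondecreasing `ℓn n i` converge, uniformly on compact
sets, to continuous nondecreasing `ℓ i` without common levels of constancy, and the balance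
problem for each `ℓn n` has a solution `tn n`, then the balance problem for `ℓ` has a unique
solution `t`, consisting of continuous (nonnegative, nondecreasing) functions, and
`tn n i → t i` uniformly on compact sets. -/
theorem stmt19 {k : ℕ} (hk : 1 ≤ k)
    (ℓn : ℕ → Fin k → ℝ≥0 → ℝ≥0) (ℓ : Fin k → ℝ≥0 → ℝ≥0)
    (hℓn : ∀ n i, Monotone (ℓn n i)) (hmono : ∀ i, Monotone (ℓ i))
    (hcont : ∀ i, Continuous (ℓ i)) (hnc : NoCommonLevelsOfConstancy ℓ)
    (hconv : ∀ i, ∀ K : Set ℝ≥0, IsCompact K →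
      TendstoUniformlyOn (fun n => ℓn n i) (ℓ i) atTop K)
    (tn : ℕ → Fin k → ℝ≥0 → ℝ≥0)
    (htn : ∀ n, IsBalanceSolution (ℓn n) (tn n)) :
    ∃ t : Fin k → ℝ≥0 → ℝ≥0,
      IsBalanceSolution ℓ t ∧
      (∀ t', IsBalanceSolution ℓ t' → t' = t) ∧
      (∀ i, Continuous (t i)) ∧
      (∀ i, ∀ K : Set ℝ≥0, IsCompact K →
        TendstoUniformlyOn (fun n => tn n i) (t i) atTop K) := by
  obtain ⟨U₀, hU₀⟩ := Filter.exists_ultrafilter_le (atTop : Filter ℕ)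
  obtain ⟨t, ht, -⟩ := bal_ultra hcont hconv htn U₀ hU₀
  have huniq : ∀ t', IsBalanceSolution ℓ t' → t' = t := fun t' ht' =>
    bal_uniq hmono hnc ht ht'
  have hpt : ∀ i s, Tendsto (fun n => tn n i s) atTop (𝓝 (t i s)) := by
    intro i s
    rw [tendsto_iff_ultrafilter]
    intro U hU
    obtain ⟨t', ht', hlim'⟩ := bal_ultra hcont hconv htn U hU
    have : t' = t := huniq t' ht'
    exact this ▸ hlim' i s
  refine ⟨t, ht, huniq, fun i => (bal_lip ht i).continuous, ?_⟩
  intro i K hK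
  obtain ⟨M, hM⟩ := hK.bddAbove
  have hKM : K ⊆ Set.Icc 0 M := fun x hx => ⟨zero_le, hM hx⟩
  refine TendstoUniformlyOn.mono ?_ hKM
  rw [Metric.tendstoUniformlyOn_iff]
  intro ε hε
  -- grid of mesh δ with (δ:ℝ) < ε/4
  obtain ⟨δ, hδpos, hδ⟩ : ∃ δ : ℝ≥0, 0 < δ ∧ (δ : ℝ) < ε / 4 := by
    refine ⟨Real.toNNReal (ε / 8), ?_, ?_⟩
    · rw [Real.toNNReal_pos]; linarith
    · rw [Real.coe_toNNReal _ (by linarith)]; linarith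
  set N : ℕ := ⌈(M / δ : ℝ≥0)⌉₊ with hN
  have hgrid : ∀ᶠ n in atTop, ∀ m ∈ Finset.range (N + 1),
      dist (tn n i ((m : ℝ≥0) * δ)) (t i ((m : ℝ≥0) * δ)) < ε / 4 := by
    rw [Filter.eventually_all_finset]
    intro m _
    exact Metric.tendsto_nhds.1 (hpt i ((m : ℝ≥0) * δ)) (ε / 4) (by linarith)
  filter_upwards [hgrid] with n hn s hs
  set m : ℕ := ⌊(s / δ : ℝ≥0)⌋₊ with hm
  set x : ℝ≥0 := (m : ℝ≥0) * δ with hx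
  have hmN : m ∈ Finset.range (N + 1) := by
    rw [Finset.mem_range, Nat.lt_succ_iff]
    calc m ≤ ⌈(s / δ : ℝ≥0)⌉₊ := Nat.floor_le_ceil _
    _ ≤ N := Nat.ceil_le_ceil (by gcongr; exact hs.2)
  have hxs : x ≤ s := by
    rw [hx, ← le_div_iff₀ hδpos]
    exact Nat.floor_le (zero_le)
  have hsx : s < x + δ := by
    have h1 : (s / δ : ℝ≥0) < m + 1 := Nat.lt_floor_add_one _
    calc s = s / δ * δ := by rw [div_mul_cancel₀ _ hδpos.ne']
    _ < ((m : ℝ≥0) + 1) * δ := by gcongr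
    _ = x + δ := by rw [hx]; ring
  have hdistsx : dist s x ≤ (δ : ℝ) := by
    rw [NNReal.dist_eq, abs_of_nonneg (by simpa using (NNReal.coe_le_coe.2 hxs))]
    have := NNReal.coe_lt_coe.2 hsx
    push_cast at this
    linarith
  have h1 : dist (t i s) (t i x) ≤ (δ : ℝ) := by
    calc dist (t i s) (t i x) ≤ 1 * dist s x := (bal_lip ht i).dist_le_mul s x
    _ ≤ (δ : ℝ) := by rw [one_mul]; exact hdistsx
  have h2 : dist (tn n i x) (tn n i s) ≤ (δ : ℝ) := by
    calc dist (tn n i x) (tn n i s) ≤ 1 * dist x s := (bal_lip (htn n) i).dist_le_mul x s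
    _ ≤ (δ : ℝ) := by rw [one_mul, dist_comm]; exact hdistsx
  have h3 : dist (tn n i x) (t i x) < ε / 4 := hn m hmN
  calc dist (t i s) (tn n i s)
      ≤ dist (t i s) (t i x) + dist (t i x) (tn n i x) + dist (tn n i x) (tn n i s) :=
        dist_triangle4 _ _ _ _
  _ < ε := by rw [dist_comm (t i x)]; linarith
end
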